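/- arXiv:2505.22196 — 5 statements merged into one kernel-verified Lean document; each statement's English description precedes it below -/
import Mathlib

section
/- Let f : 𝒳 → ℝ^d be an encoder with ‖f(x)‖ = 1 for all x ∈ 𝒳, assume the identity map belongs to 𝒜, assume τ_K < 1, and assume the centered representation property E_{a~P_A} f(a(x̄)) = f(x̄) for every x̄ ∈ 𝒳. Then R^sup(f) ≤ (1/(1−τ_K)) · [ R^un(f) − E_{(c,c_1,…,c_K)~π^{K+1}} log(Col(c,{c_k}) + 1) + D_min(f) + D_max(f) ], i.e. the coefficient of the maximum same-image distance improves from 5 to 1. -/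
/-!
For a fixed task `(c, c₁, …, c_K)` and anchor image `x̄`, the InfoNCE loss is
`log (1 + ∑ₖ exp sₖ)` with scores `sₖ = -⟪f (a x̄), f (a' x̄) - f (aₖ x̄ₖ)⟫`, and each score is
affine in any one of the representations `f (aₖ x̄ₖ)`, `f (a' x̄)`, `f (a x̄)`, `f x̄ₖ` when the
others are fixed. Since `z ↦ log (1 + ∑ₖ exp zₖ)` is convex, Jensen's inequality can be applied to
the nested expectations one at a time, innermost first: the centering assumption
`E_a f (a x̄) = f x̄` removes the augmentations, and averaging the negatives produces the class
means `μ_{cₖ}`. What remains is the mean-classifier loss with the positive `μ_c` replaced by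
`f x̄`; this replacement lowers the loss by at most `⟪f x̄, f x̄ - μ_c⟫`, whose class average is at
most `D_min + D_max` by the triangle inequality through the identity augmentation. Finally, every
negative colliding with the anchor class contributes `exp 0 = 1` to the supervised loss, which
accounts for `log (Col + 1)`.
-/

open MeasureTheory Real
open scoped BigOperators RealInnerProductSpace

noncomputable section

variable {X : Type*} [MeasurableSpace X] {Ω : Type*} [MeasurableSpace Ω] {d C : ℕ}

/-- The InfoNCE loss in logistic form:
`L^un(x, x', {x_k}; f) = log(1 + Σ_k exp(−f(x)ᵀ[f(x') − f(x_k)]))`. -/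
def infoNCE (f : X → EuclideanSpace ℝ (Fin d)) (K : ℕ) (x x' : X) (xs : Fin K → X) : ℝ :=
  Real.log (1 + ∑ k, Real.exp (-⟪f x, f x' - f (xs k)⟫))

/-- The probability of drawing the class tuple `(c, c_1, …, c_K)` from `π^{K+1}`. -/
def clsWeight (pr : Fin C → ℝ) {K : ℕ} (c : Fin C) (cs : Fin K → Fin C) : ℝ :=
  pr c * ∏ k, pr (cs k)

/-- The unsupervised contrastive risk `R^un(f)`. -/
def Run (pr : Fin C → ℝ) (ρ : Fin C → Measure X) (PA : Measure Ω) (A : Ω → X → X)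
    (f : X → EuclideanSpace ℝ (Fin d)) (K : ℕ) : ℝ :=
  ∑ c, ∑ cs : Fin K → Fin C, clsWeight pr c cs *
    ∫ xb, ∫ xs, ∫ a, ∫ a', ∫ as,
        infoNCE f K (A a xb) (A a' xb) (fun k => A (as k) (xs k))
      ∂(Measure.pi fun _ : Fin K => PA) ∂PA ∂PA
      ∂(Measure.pi fun k => ρ (cs k)) ∂(ρ c)

/-- The mean-classifier weight `μ_c = E_{x̄~ρ_c} f(x̄)`. -/
def meanRep (ρ : Fin C → Measure X) (f : X → EuclideanSpace ℝ (Fin d)) (c : Fin C) :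
    EuclideanSpace ℝ (Fin d) :=
  ∫ xb, f xb ∂(ρ c)

/-- The collision number `Col(c, {c_k}) = Σ_k 1[c_k = c]`. -/
def colNum {K : ℕ} (c : Fin C) (cs : Fin K → Fin C) : ℕ :=
  ∑ k, if cs k = c then 1 else 0

/-- The class-collision probability `τ_K = P(Col ≠ 0)`. -/
def tauK (pr : Fin C → ℝ) (K : ℕ) : ℝ :=
  ∑ c, ∑ cs : Fin K → Fin C, if colNum c cs ≠ 0 then clsWeight pr c cs else 0

/-- The expected logistic loss of the mean classifier on the task `(c, c_1, …, c_K)`. -/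
def supLoss (ρ : Fin C → Measure X) (f : X → EuclideanSpace ℝ (Fin d)) {K : ℕ}
    (c : Fin C) (cs : Fin K → Fin C) : ℝ :=
  ∫ xb, Real.log (1 + ∑ k, Real.exp (-⟪f xb, meanRep ρ f c - meanRep ρ f (cs k)⟫)) ∂(ρ c)

/-- The supervised risk of the mean classifier, conditioned on no class collision. -/
def Rsup (pr : Fin C → ℝ) (ρ : Fin C → Measure X) (f : X → EuclideanSpace ℝ (Fin d))
    (K : ℕ) : ℝ :=
  (∑ c, ∑ cs : Fin K → Fin C,
    if colNum c cs = 0 then clsWeight pr c cs * supLoss ρ f c cs else 0) / (1 - tauK pr K)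

/-- `E_{(c,c_1,…,c_K)~π^{K+1}} log(Col + 1)`. -/
def expLogCol (pr : Fin C → ℝ) (K : ℕ) : ℝ :=
  ∑ c, ∑ cs : Fin K → Fin C, clsWeight pr c cs * Real.log (colNum c cs + 1)

/-- `D_min(f)`: expected minimum distance between augmentations of two i.i.d. same-class
images, `E_c E_{x̄,x̄'~ρ_c} E_a inf_{a'} ‖f(a(x̄)) − f(a'(x̄'))‖`. -/
def Dmin (pr : Fin C → ℝ) (ρ : Fin C → Measure X) (PA : Measure Ω) (A : Ω → X → X)
    (f : X → EuclideanSpace ℝ (Fin d)) : ℝ :=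
  ∑ c, pr c *
    ∫ xb, ∫ xb', ∫ a, (⨅ a' : Ω, ‖f (A a xb) - f (A a' xb')‖) ∂PA ∂(ρ c) ∂(ρ c)

/-- `D_max(f)`: expected maximum distance between two augmentations of the same image,
`E_c E_{x̄'~ρ_c} sup_{a,a'} ‖f(a(x̄')) − f(a'(x̄'))‖`. -/
def Dmax (pr : Fin C → ℝ) (ρ : Fin C → Measure X) (A : Ω → X → X)
    (f : X → EuclideanSpace ℝ (Fin d)) : ℝ :=
  ∑ c, pr c * ∫ xb', (⨆ p : Ω × Ω, ‖f (A p.1 xb') - f (A p.2 xb')‖) ∂(ρ c)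

/-- The intermediate supervised risk `R̄^sup(f)`. -/
def Rbarsup (pr : Fin C → ℝ) (ρ : Fin C → Measure X) (f : X → EuclideanSpace ℝ (Fin d))
    (K : ℕ) : ℝ :=
  ∑ c, ∑ cs : Fin K → Fin C, clsWeight pr c cs * supLoss ρ f c cs

/-- The inner risk `r_k(i_1,…,i_k)` for fixed anchor class `c`, anchor image `xb` and
anchor augmentation `a`: the first `k` negatives are drawn from classes `i_1,…,i_k` and
the remaining `K − k` negatives from class `c`. -/
def innerRisk (ρ : Fin C → Measure X) (PA : Measure Ω) (A : Ω → X → X)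
    (f : X → EuclideanSpace ℝ (Fin d)) (K : ℕ) (c : Fin C) (xb : X) (a : Ω)
    (k : ℕ) (i : Fin k → Fin C) : ℝ :=
  ∫ xs, ∫ a', ∫ as, infoNCE f K (A a xb) (A a' xb) (fun j => A (as j) (xs j))
    ∂(Measure.pi fun _ : Fin K => PA) ∂PA
    ∂(Measure.pi fun j : Fin K => ρ (if h : (j : ℕ) < k then i ⟨j, h⟩ else c))

/-- The weight `p_k(i_1,…,i_k) = binom(K,k)·π_{i_1}⋯π_{i_k}·π_c^{K−k}`. -/
def pWeight (pr : Fin C → ℝ) (K : ℕ) (c : Fin C) (k : ℕ) (i : Fin k → Fin C) : ℝ :=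
  (Nat.choose K k : ℝ) * (∏ m, pr (i m)) * pr c ^ (K - k)

/-- `r_k^sup(i_1,…,i_k) = log(1 + (K−k) + Σ_{m=1}^k exp(−uᵀ(μ_c − μ_{i_m})))`, where
`u` is the representation of the anchor. -/
def rkSup (ρ : Fin C → Measure X) (f : X → EuclideanSpace ℝ (Fin d)) (K : ℕ)
    (c : Fin C) (u : EuclideanSpace ℝ (Fin d)) (k : ℕ) (i : Fin k → Fin C) : ℝ :=
  Real.log (1 + ((K - k : ℕ) : ℝ) +
    ∑ m, Real.exp (-⟪u, meanRep ρ f c - meanRep ρ f (i m)⟫))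

section LogOneAddSumExp

variable {ι : Type*} [Fintype ι]

lemma log_one_add_sum_exp_nonneg (z : ι → ℝ) : 0 ≤ log (1 + ∑ i, exp (z i)) :=
  log_nonneg (le_add_of_nonneg_right (by positivity))

lemma log_one_add_sum_exp_mono {z z' : ι → ℝ} (h : z ≤ z') :
    log (1 + ∑ i, exp (z i)) ≤ log (1 + ∑ i, exp (z' i)) :=
  log_le_log (by positivity) (by gcongr with i; exact h i)

lemma log_one_add_sum_exp_add_sum_mul_sub_le (w z : ι → ℝ) :
    log (1 + ∑ i, exp (w i)) + ∑ i, exp (w i) / (1 + ∑ j, exp (w j)) * (z i - w i) ≤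
      log (1 + ∑ i, exp (z i)) := by
  set S := 1 + ∑ j, exp (w j)
  have hS : 0 < S := by positivity
  -- Jensen for `exp` with weight `1 / S` at `0` and weights `exp (w i) / S` at `z i - w i`
  have hJ := convexOn_exp.map_sum_le (t := Finset.univ)
    (w := fun o : Option ι => o.elim (1 / S) fun i => exp (w i) / S)
    (p := fun o => o.elim 0 fun i => z i - w i)
    (fun o _ => by cases o <;> simp only [Option.elim] <;> positivity)
    (by
      simp only [Fintype.sum_option, Option.elim, ← Finset.sum_div, ← add_div]
      exact div_self hS.ne')
    (fun _ _ => Set.mem_univ _)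
  have hsum : ∑ i, exp (w i) / S * exp (z i - w i) = ∑ i, exp (z i) / S :=
    Finset.sum_congr rfl fun i _ => by rw [div_mul_eq_mul_div, ← exp_add, add_sub_cancel]
  simp only [Fintype.sum_option, Option.elim, smul_eq_mul, mul_zero, exp_zero, zero_add,
    hsum, mul_one, ← Finset.sum_div, ← add_div] at hJ
  calc log S + ∑ i, exp (w i) / S * (z i - w i)
      ≤ log S + log ((1 + ∑ i, exp (z i)) / S) := by
        gcongr
        rw [← log_exp (∑ i, _)]
        exact log_le_log (exp_pos _) (by simpa only [mul_comm] using hJ)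
    _ = log (1 + ∑ i, exp (z i)) := by rw [log_div (by positivity) hS.ne']; ring

lemma log_one_add_sum_exp_integral_le {α : Type*} [MeasurableSpace α] {ν : Measure α}
    [IsProbabilityMeasure ν] {Z : ι → α → ℝ} {G : α → ℝ} (hZ : ∀ i, Integrable (Z i) ν)
    (hG : Integrable G ν) (hle : ∀ x, log (1 + ∑ i, exp (Z i x)) ≤ G x) :
    log (1 + ∑ i, exp (∫ x, Z i x ∂ν)) ≤ ∫ x, G x ∂ν := by
  set w := fun i => ∫ x, Z i x ∂ν
  set p := fun i => exp (w i) / (1 + ∑ j, exp (w j))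
  have hT : Integrable (fun x => log (1 + ∑ i, exp (w i)) + ∑ i, p i * (Z i x - w i)) ν := by
    fun_prop
  calc log (1 + ∑ i, exp (w i))
      = ∫ x, (log (1 + ∑ i, exp (w i)) + ∑ i, p i * (Z i x - w i)) ∂ν := by
        rw [integral_add (integrable_const _) (by fun_prop), integral_finsetSum _ (by fun_prop)]
        simp [integral_const_mul, integral_sub (hZ _) (integrable_const _), w]
    _ ≤ ∫ x, G x ∂ν :=
        integral_mono hT hG fun x =>
          (log_one_add_sum_exp_add_sum_mul_sub_le w (Z · x)).trans (hle x)

end LogOneAddSumExp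

section ContrastiveLoss

variable {ι : Type*} [Fintype ι] {E : Type*} [NormedAddCommGroup E] [InnerProductSpace ℝ E]

/-- `infoNCE` and the integrand of `supLoss` are instances of this loss, definitionally. -/
def contrastiveLoss (u v : E) (w : ι → E) : ℝ :=
  log (1 + ∑ i, exp (-⟪u, v - w i⟫))

lemma contrastiveLoss_nonneg (u v : E) (w : ι → E) : 0 ≤ contrastiveLoss u v w :=
  log_one_add_sum_exp_nonneg _

lemma abs_inner_sub_le_two {u v w : E} (hu : ‖u‖ ≤ 1) (hv : ‖v‖ ≤ 1) (hw : ‖w‖ ≤ 1) :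
    |⟪u, v - w⟫| ≤ 2 :=
  (abs_real_inner_le_norm _ _).trans <| by
    nlinarith [norm_sub_le_of_le hv hw, norm_nonneg u, norm_nonneg (v - w)]

lemma abs_contrastiveLoss_le {u v : E} {w : ι → E} (hu : ‖u‖ ≤ 1) (hv : ‖v‖ ≤ 1)
    (hw : ∀ i, ‖w i‖ ≤ 1) :
    |contrastiveLoss u v w| ≤ log (1 + Fintype.card ι * exp 2) := by
  rw [abs_of_nonneg (contrastiveLoss_nonneg u v w)]
  refine (log_one_add_sum_exp_mono (z' := fun _ => 2) fun i => ?_).trans_eq (by simp)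
  exact (neg_le_abs _).trans (abs_inner_sub_le_two hu hv (hw i))

lemma contrastiveLoss_sub_inner_le {u v v' : E} (w : ι → E) (h : 0 ≤ ⟪u, v' - v⟫) :
    contrastiveLoss u v w - ⟪u, v' - v⟫ ≤ contrastiveLoss u v' w := by
  set δ := ⟪u, v' - v⟫
  have hshift : ∀ i, -⟪u, v' - w i⟫ = -δ + -⟪u, v - w i⟫ := fun i => by
    simp only [δ, inner_sub_right]; ring
  have hle : exp (-δ) * (1 + ∑ i, exp (-⟪u, v - w i⟫)) ≤ 1 + ∑ i, exp (-⟪u, v' - w i⟫) := by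
    simp only [mul_add, mul_one, Finset.mul_sum, ← exp_add, hshift]
    gcongr
    exact exp_le_one_iff.2 (neg_nonpos.2 h)
  calc contrastiveLoss u v w - δ = log (exp (-δ) * (1 + ∑ i, exp (-⟪u, v - w i⟫))) := by
        rw [log_mul (exp_ne_zero _) (by positivity), log_exp, contrastiveLoss]; ring
    _ ≤ contrastiveLoss u v' w := log_le_log (by positivity) hle

lemma log_card_add_one_le_contrastiveLoss (u v : E) {w : ι → E} (s : Finset ι)
    (hs : ∀ i ∈ s, w i = v) : log (s.card + 1) ≤ contrastiveLoss u v w := by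
  refine log_le_log (by positivity) ?_
  have : (s.card : ℝ) ≤ ∑ i, exp (-⟪u, v - w i⟫) :=
    calc (s.card : ℝ) = ∑ i ∈ s, exp (-⟪u, v - w i⟫) := by
          rw [Finset.sum_congr rfl fun i hi => by rw [hs i hi, sub_self, inner_zero_right,
            neg_zero, exp_zero]]
          simp
      _ ≤ _ := Finset.sum_le_sum_of_subset_of_nonneg (Finset.subset_univ s) (by intros; positivity)
  linarith

end ContrastiveLoss

section IntegralContrastiveLoss

variable {α : Type*} [MeasurableSpace α] {ν : Measure α} [IsProbabilityMeasure ν]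
  {ι : Type*} [Fintype ι] {E : Type*} [NormedAddCommGroup E] [InnerProductSpace ℝ E]
  [CompleteSpace E]

lemma integral_inner_const_sub {g : α → E} (hg : Integrable g ν) (p q : E) :
    ∫ x, ⟪p, q - g x⟫ ∂ν = ⟪p, q - ∫ x, g x ∂ν⟫ := by
  rw [integral_inner (f := fun x => q - g x) ((integrable_const q).sub hg),
    integral_sub (integrable_const q) hg]
  simp

lemma integral_inner_sub_const {g : α → E} (hg : Integrable g ν) (p q : E) :
    ∫ x, ⟪p, g x - q⟫ ∂ν = ⟪p, (∫ x, g x ∂ν) - q⟫ := by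
  rw [integral_inner (f := fun x => g x - q) (hg.sub (integrable_const q)),
    integral_sub hg (integrable_const q)]
  simp

lemma contrastiveLoss_integral_anchor_le {g : α → E} {v : E} {w : ι → E} {G : α → ℝ}
    (hg : Integrable g ν) (hG : Integrable G ν) (hle : ∀ x, contrastiveLoss (g x) v w ≤ G x) :
    contrastiveLoss (∫ x, g x ∂ν) v w ≤ ∫ x, G x ∂ν := by
  have hZ : ∀ i, ∫ x, -⟪g x, v - w i⟫ ∂ν = -⟪∫ x, g x ∂ν, v - w i⟫ := fun i => by
    simp_rw [integral_neg, real_inner_comm (v - w i), integral_inner hg]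
  rw [contrastiveLoss]
  simpa only [hZ] using log_one_add_sum_exp_integral_le (Z := fun i x => -⟪g x, v - w i⟫)
    (fun i => (hg.inner_const _).neg) hG hle

lemma contrastiveLoss_integral_positive_le {u : E} {g : α → E} {w : ι → E} {G : α → ℝ}
    (hg : Integrable g ν) (hG : Integrable G ν) (hle : ∀ x, contrastiveLoss u (g x) w ≤ G x) :
    contrastiveLoss u (∫ x, g x ∂ν) w ≤ ∫ x, G x ∂ν := by
  rw [contrastiveLoss]
  simpa only [integral_neg, integral_inner_sub_const hg] using
    log_one_add_sum_exp_integral_le (Z := fun i x => -⟪u, g x - w i⟫)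
      (fun i => ((hg.sub (integrable_const _)).const_inner _).neg) hG hle

lemma contrastiveLoss_integral_negatives_le {u v : E} {W : ι → α → E} {G : α → ℝ}
    (hW : ∀ i, Integrable (W i) ν) (hG : Integrable G ν)
    (hle : ∀ x, contrastiveLoss u v (W · x) ≤ G x) :
    contrastiveLoss u v (fun i => ∫ x, W i x ∂ν) ≤ ∫ x, G x ∂ν := by
  rw [contrastiveLoss]
  simpa only [integral_neg, integral_inner_const_sub (hW _)] using
    log_one_add_sum_exp_integral_le (Z := fun i x => -⟪u, v - W i x⟫)
      (fun i => (((integrable_const _).sub (hW i)).const_inner _).neg) hG hle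

end IntegralContrastiveLoss

section BoundedIntegrals

variable {α β : Type*} [MeasurableSpace α] [MeasurableSpace β]

@[fun_prop]
lemma Measurable.integral_prod_right {ν : Measure β} [SFinite ν] {F : α → β → ℝ}
    (hF : Measurable fun p : α × β => F p.1 p.2) : Measurable fun x => ∫ y, F x y ∂ν :=
  (hF.stronglyMeasurable.integral_prod_right' (ν := ν)).measurable

lemma integrable_of_abs_le {ν : Measure α} [IsFiniteMeasure ν] {g : α → ℝ} (hg : Measurable g)
    {M : ℝ} (h : ∀ x, |g x| ≤ M) : Integrable g ν :=
  .of_bound hg.aestronglyMeasurable M (Filter.Eventually.of_forall h)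

lemma abs_integral_le_of_abs_le {ν : Measure α} [IsProbabilityMeasure ν] {g : α → ℝ} {M : ℝ}
    (h : ∀ x, |g x| ≤ M) : |∫ x, g x ∂ν| ≤ M := by
  simpa using norm_integral_le_of_norm_le_const (μ := ν) (f := g) (C := M)
    (Filter.Eventually.of_forall h)

end BoundedIntegrals

lemma norm_sub_le_iInf_add_iSup {ι E : Type*} [SeminormedAddCommGroup E] (z : E) (g : ι → E)
    (i₀ : ι) (hg : BddAbove (Set.range fun p : ι × ι => ‖g p.1 - g p.2‖)) :
    ‖z - g i₀‖ ≤ (⨅ i, ‖z - g i‖) + ⨆ p : ι × ι, ‖g p.1 - g p.2‖ := by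
  have : Nonempty ι := ⟨i₀⟩
  rw [← sub_le_iff_le_add]
  refine le_ciInf fun i => ?_
  have := le_ciSup hg (i, i₀)
  have := norm_sub_le_norm_sub_add_norm_sub z (g i) (g i₀)
  linarith

lemma abs_infoNCE_le {Y : Type*} {f : Y → EuclideanSpace ℝ (Fin d)} (hf : ∀ y, ‖f y‖ ≤ 1)
    {K : ℕ} (y y' : Y) (ys : Fin K → Y) : |infoNCE f K y y' ys| ≤ log (1 + K * exp 2) := by
  have h := abs_contrastiveLoss_le (hf y) (hf y') fun k => hf (ys k)
  rwa [Fintype.card_fin] at h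

section Encoder

variable {ρ : Fin C → Measure X} [∀ c, IsProbabilityMeasure (ρ c)] {PA : Measure Ω}
  [IsProbabilityMeasure PA] {A : Ω → X → X} {f : X → EuclideanSpace ℝ (Fin d)}

lemma norm_meanRep_le (hf : ∀ x, ‖f x‖ ≤ 1) (c : Fin C) : ‖meanRep ρ f c‖ ≤ 1 :=
  (norm_integral_le_of_norm_le_const (μ := ρ c) (Filter.Eventually.of_forall hf)).trans_eq
    (by simp)

lemma integrable_contrastiveLoss_meanRep (hfm : Measurable f) (hf : ∀ x, ‖f x‖ ≤ 1) {K : ℕ}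
    (c : Fin C) (cs : Fin K → Fin C) :
    Integrable (fun x => contrastiveLoss (f x) (meanRep ρ f c) fun k => meanRep ρ f (cs k))
      (ρ c) :=
  integrable_of_abs_le (by unfold contrastiveLoss; fun_prop) fun x =>
    abs_contrastiveLoss_le (hf x) (norm_meanRep_le hf c) fun k => norm_meanRep_le hf (cs k)

lemma log_colNum_add_one_le_supLoss (hfm : Measurable f) (hf : ∀ x, ‖f x‖ ≤ 1) {K : ℕ}
    (c : Fin C) (cs : Fin K → Fin C) : log (colNum c cs + 1) ≤ supLoss ρ f c cs := by
  have hcol : colNum c cs = (Finset.univ.filter (cs · = c)).card := by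
    rw [colNum, Finset.card_filter]
  calc log (colNum c cs + 1) = ∫ _, log (colNum c cs + 1) ∂(ρ c) := by simp
    _ ≤ supLoss ρ f c cs :=
      integral_mono (integrable_const _) (integrable_contrastiveLoss_meanRep hfm hf c cs)
        fun x => by
          rw [hcol]
          exact log_card_add_one_le_contrastiveLoss _ _ _ fun k hk => by
            rw [(Finset.mem_filter.1 hk).2]

lemma integrable_comp_augment (hA : Measurable fun p : Ω × X => A p.1 p.2) (hfm : Measurable f)
    (hf : ∀ x, ‖f x‖ ≤ 1) (x : X) : Integrable (fun a => f (A a x)) PA :=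
  .of_bound (Measurable.aestronglyMeasurable (by fun_prop)) 1
    (Filter.Eventually.of_forall fun _ => hf _)

theorem contrastiveLoss_le_integral_augmented (hA : Measurable fun p : Ω × X => A p.1 p.2)
    (hfm : Measurable f) (hf : ∀ x, ‖f x‖ ≤ 1) (hcent : ∀ x, ∫ a, f (A a x) ∂PA = f x)
    {K : ℕ} (xb : X) (xs : Fin K → X) :
    contrastiveLoss (f xb) (f xb) (fun k => f (xs k)) ≤
      ∫ a, ∫ a', ∫ as, infoNCE f K (A a xb) (A a' xb) (fun k => A (as k) (xs k))
        ∂(Measure.pi fun _ : Fin K => PA) ∂PA ∂PA := by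
  have hfA := integrable_comp_augment (PA := PA) hA hfm hf
  have hL := abs_infoNCE_le hf (K := K)
  have hneg : ∀ a a' : Ω, contrastiveLoss (f (A a xb)) (f (A a' xb)) (fun k => f (xs k)) ≤
      ∫ as, infoNCE f K (A a xb) (A a' xb) (fun k => A (as k) (xs k))
        ∂(Measure.pi fun _ : Fin K => PA) := by
    intro a a'
    have hW : ∀ k, ∫ as, f (A (as k) (xs k)) ∂(Measure.pi fun _ : Fin K => PA) = f (xs k) :=
      fun k => (integral_comp_eval (μ := fun _ => PA) (f := fun a => f (A a (xs k)))
        (hfA _).aestronglyMeasurable).trans (hcent _)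
    have hWint : ∀ k, Integrable (fun as : Fin K → Ω => f (A (as k) (xs k)))
        (Measure.pi fun _ => PA) := fun k => integrable_comp_eval (μ := fun _ => PA) (hfA (xs k))
    have hG : Integrable (fun as : Fin K → Ω => infoNCE f K (A a xb) (A a' xb)
        fun k => A (as k) (xs k)) (Measure.pi fun _ => PA) :=
      integrable_of_abs_le (by unfold infoNCE; fun_prop) fun _ => hL _ _ _
    simpa only [hW] using contrastiveLoss_integral_negatives_le (u := f (A a xb))
      (v := f (A a' xb)) hWint hG fun _ => le_rfl
  have hpos : ∀ a : Ω, contrastiveLoss (f (A a xb)) (f xb) (fun k => f (xs k)) ≤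
      ∫ a', ∫ as, infoNCE f K (A a xb) (A a' xb) (fun k => A (as k) (xs k))
        ∂(Measure.pi fun _ : Fin K => PA) ∂PA := fun a => by
    simpa only [hcent] using contrastiveLoss_integral_positive_le (hfA xb)
      (integrable_of_abs_le (by unfold infoNCE; fun_prop) fun _ =>
        abs_integral_le_of_abs_le fun _ => hL _ _ _) (hneg a)
  simpa only [hcent] using contrastiveLoss_integral_anchor_le (hfA xb)
    (integrable_of_abs_le (by unfold infoNCE; fun_prop) fun _ =>
      abs_integral_le_of_abs_le fun _ => abs_integral_le_of_abs_le fun _ => hL _ _ _) hpos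

theorem contrastiveLoss_le_integral_infoNCE (hA : Measurable fun p : Ω × X => A p.1 p.2)
    (hfm : Measurable f) (hf : ∀ x, ‖f x‖ ≤ 1) (hcent : ∀ x, ∫ a, f (A a x) ∂PA = f x)
    {K : ℕ} (cs : Fin K → Fin C) (xb : X) :
    contrastiveLoss (f xb) (f xb) (fun k => meanRep ρ f (cs k)) ≤
      ∫ xs, ∫ a, ∫ a', ∫ as, infoNCE f K (A a xb) (A a' xb) (fun k => A (as k) (xs k))
        ∂(Measure.pi fun _ : Fin K => PA) ∂PA ∂PA ∂(Measure.pi fun k => ρ (cs k)) := by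
  have hfρ : ∀ c, Integrable f (ρ c) := fun c =>
    .of_bound hfm.aestronglyMeasurable 1 (Filter.Eventually.of_forall hf)
  have hW : ∀ k, ∫ xs, f (xs k) ∂(Measure.pi fun k => ρ (cs k)) = meanRep ρ f (cs k) :=
    fun k => integral_comp_eval (μ := fun k => ρ (cs k)) (f := f) (hfρ _).aestronglyMeasurable
  simpa only [hW] using contrastiveLoss_integral_negatives_le
    (fun k => integrable_comp_eval (μ := fun k => ρ (cs k)) (hfρ (cs k)))
    (integrable_of_abs_le (by unfold infoNCE; fun_prop) fun _ =>
      abs_integral_le_of_abs_le fun _ => abs_integral_le_of_abs_le fun _ =>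
        abs_integral_le_of_abs_le fun _ => abs_infoNCE_le hf _ _ _)
    (contrastiveLoss_le_integral_augmented hA hfm hf hcent xb)

theorem supLoss_sub_le_integral_infoNCE (hA : Measurable fun p : Ω × X => A p.1 p.2)
    (hfm : Measurable f) (hf : ∀ x, ‖f x‖ = 1) (hcent : ∀ x, ∫ a, f (A a x) ∂PA = f x)
    {K : ℕ} (c : Fin C) (cs : Fin K → Fin C) :
    supLoss ρ f c cs - ∫ x, ⟪f x, f x - meanRep ρ f c⟫ ∂(ρ c) ≤
      ∫ xb, ∫ xs, ∫ a, ∫ a', ∫ as,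
          infoNCE f K (A a xb) (A a' xb) (fun k => A (as k) (xs k))
        ∂(Measure.pi fun _ : Fin K => PA) ∂PA ∂PA
        ∂(Measure.pi fun k => ρ (cs k)) ∂(ρ c) := by
  have hf1 : ∀ x, ‖f x‖ ≤ 1 := fun x => (hf x).le
  have hδ : ∀ x, 0 ≤ ⟪f x, f x - meanRep ρ f c⟫ := fun x => by
    rw [inner_sub_right, real_inner_self_eq_norm_sq, hf, one_pow, sub_nonneg]
    exact (real_inner_le_norm _ _).trans (by rw [hf, one_mul]; exact norm_meanRep_le hf1 c)
  have hδint : Integrable (fun x => ⟪f x, f x - meanRep ρ f c⟫) (ρ c) :=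
    integrable_of_abs_le (by fun_prop) fun x =>
      abs_inner_sub_le_two (hf1 x) (hf1 x) (norm_meanRep_le hf1 c)
  have hL := integrable_contrastiveLoss_meanRep (ρ := ρ) hfm hf1 c cs
  have hR : Integrable (fun xb => ∫ xs, ∫ a, ∫ a', ∫ as,
      infoNCE f K (A a xb) (A a' xb) (fun k => A (as k) (xs k))
        ∂(Measure.pi fun _ : Fin K => PA) ∂PA ∂PA ∂(Measure.pi fun k => ρ (cs k))) (ρ c) :=
    integrable_of_abs_le (by unfold infoNCE; fun_prop) fun _ =>
      abs_integral_le_of_abs_le fun _ => abs_integral_le_of_abs_le fun _ =>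
        abs_integral_le_of_abs_le fun _ => abs_integral_le_of_abs_le fun _ =>
          abs_infoNCE_le hf1 _ _ _
  calc supLoss ρ f c cs - ∫ x, ⟪f x, f x - meanRep ρ f c⟫ ∂(ρ c)
      = ∫ x, (contrastiveLoss (f x) (meanRep ρ f c) (fun k => meanRep ρ f (cs k)) -
          ⟪f x, f x - meanRep ρ f c⟫) ∂(ρ c) := (integral_sub hL hδint).symm
    _ ≤ _ := integral_mono (hL.sub hδint) hR fun x =>
        (contrastiveLoss_sub_inner_le _ (hδ x)).trans
          (contrastiveLoss_le_integral_infoNCE hA hfm hf1 hcent cs x)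

lemma inner_sub_le_integral_iInf_add_iSup (hA : Measurable fun p : Ω × X => A p.1 p.2)
    (hfm : Measurable f) (hf : ∀ x, ‖f x‖ ≤ 1) (hid : ∃ ω : Ω, A ω = id)
    (hcent : ∀ x, ∫ a, f (A a x) ∂PA = f x) {xb xb' : X} (hDmin : Integrable (fun a => ⨅ a' : Ω, ‖f (A a xb) - f (A a' xb')‖) PA) :
    ⟪f xb, f xb - f xb'⟫ ≤ (∫ a, (⨅ a' : Ω, ‖f (A a xb) - f (A a' xb')‖) ∂PA) +
      ⨆ p : Ω × Ω, ‖f (A p.1 xb') - f (A p.2 xb')‖ := by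
  obtain ⟨ω₀, hω₀⟩ := hid
  set S := ⨆ p : Ω × Ω, ‖f (A p.1 xb') - f (A p.2 xb')‖
  have hfA := integrable_comp_augment (PA := PA) hA hfm hf xb
  have hS : BddAbove (Set.range fun p : Ω × Ω => ‖f (A p.1 xb') - f (A p.2 xb')‖) :=
    ⟨2, by rintro _ ⟨p, rfl⟩; linarith [norm_sub_le_of_le (hf (A p.1 xb')) (hf (A p.2 xb'))]⟩
  have hpt : ∀ a, ⟪f xb, f (A a xb) - f xb'⟫ ≤ (⨅ a' : Ω, ‖f (A a xb) - f (A a' xb')‖) + S := by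
    intro a
    have h := norm_sub_le_iInf_add_iSup (f (A a xb)) (fun a' => f (A a' xb')) ω₀ hS
    simp only [hω₀, id] at h
    exact (real_inner_le_norm _ _).trans ((mul_le_of_le_one_left (norm_nonneg _) (hf _)).trans h)
  calc ⟪f xb, f xb - f xb'⟫ = ∫ a, ⟪f xb, f (A a xb) - f xb'⟫ ∂PA := by
        rw [integral_inner_sub_const hfA, hcent]
    _ ≤ ∫ a, ((⨅ a' : Ω, ‖f (A a xb) - f (A a' xb')‖) + S) ∂PA :=
        integral_mono ((hfA.sub (integrable_const _)).const_inner _)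
          (hDmin.add (integrable_const _)) hpt
    _ = _ := by rw [integral_add hDmin (integrable_const _)]; simp

theorem integral_inner_sub_meanRep_le (hA : Measurable fun p : Ω × X => A p.1 p.2)
    (hfm : Measurable f) (hf : ∀ x, ‖f x‖ ≤ 1) (hid : ∃ ω : Ω, A ω = id)
    (hcent : ∀ x, ∫ a, f (A a x) ∂PA = f x) (c : Fin C)
    (hDmin1 : ∀ xb xb' : X, Integrable (fun a => ⨅ a' : Ω, ‖f (A a xb) - f (A a' xb')‖) PA)
    (hDmin2 : ∀ xb : X,
      Integrable (fun xb' => ∫ a, (⨅ a' : Ω, ‖f (A a xb) - f (A a' xb')‖) ∂PA) (ρ c))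
    (hDmin3 : Integrable
      (fun xb => ∫ xb', ∫ a, (⨅ a' : Ω, ‖f (A a xb) - f (A a' xb')‖) ∂PA ∂(ρ c)) (ρ c))
    (hDmax : Integrable (fun xb' => ⨆ p : Ω × Ω, ‖f (A p.1 xb') - f (A p.2 xb')‖) (ρ c)) :
    ∫ x, ⟪f x, f x - meanRep ρ f c⟫ ∂(ρ c) ≤
      (∫ xb, ∫ xb', ∫ a, (⨅ a' : Ω, ‖f (A a xb) - f (A a' xb')‖) ∂PA ∂(ρ c) ∂(ρ c)) +
        ∫ xb', (⨆ p : Ω × Ω, ‖f (A p.1 xb') - f (A p.2 xb')‖) ∂(ρ c) := by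
  set S := fun xb' => ⨆ p : Ω × Ω, ‖f (A p.1 xb') - f (A p.2 xb')‖
  have hfρ : Integrable f (ρ c) :=
    .of_bound hfm.aestronglyMeasurable 1 (Filter.Eventually.of_forall hf)
  have hpt : ∀ xb, ⟪f xb, f xb - meanRep ρ f c⟫ ≤
      (∫ xb', ∫ a, (⨅ a' : Ω, ‖f (A a xb) - f (A a' xb')‖) ∂PA ∂(ρ c)) + ∫ xb', S xb' ∂(ρ c) := by
    intro xb
    calc ⟪f xb, f xb - meanRep ρ f c⟫ = ∫ xb', ⟪f xb, f xb - f xb'⟫ ∂(ρ c) :=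
          (integral_inner_const_sub hfρ _ _).symm
      _ ≤ ∫ xb', ((∫ a, (⨅ a' : Ω, ‖f (A a xb) - f (A a' xb')‖) ∂PA) + S xb') ∂(ρ c) :=
          integral_mono (((integrable_const _).sub hfρ).const_inner _) ((hDmin2 xb).add hDmax)
            fun xb' => inner_sub_le_integral_iInf_add_iSup hA hfm hf hid hcent (hDmin1 xb xb')
      _ = _ := integral_add (hDmin2 xb) hDmax
  calc ∫ x, ⟪f x, f x - meanRep ρ f c⟫ ∂(ρ c)
      ≤ ∫ xb, ((∫ xb', ∫ a, (⨅ a' : Ω, ‖f (A a xb) - f (A a' xb')‖) ∂PA ∂(ρ c)) +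
          ∫ xb', S xb' ∂(ρ c)) ∂(ρ c) :=
        integral_mono (integrable_of_abs_le (by fun_prop) fun x =>
            abs_inner_sub_le_two (hf x) (hf x) (norm_meanRep_le hf c))
          (hDmin3.add (integrable_const _)) hpt
    _ = _ := by rw [integral_add hDmin3 (integrable_const _)]; simp

theorem ite_supLoss_add_log_colNum_le (hA : Measurable fun p : Ω × X => A p.1 p.2)
    (hfm : Measurable f) (hf : ∀ x, ‖f x‖ = 1) (hcent : ∀ x, ∫ a, f (A a x) ∂PA = f x)
    {K : ℕ} (c : Fin C) (cs : Fin K → Fin C) :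
    (if colNum c cs = 0 then supLoss ρ f c cs else 0) + log (colNum c cs + 1) ≤
      (∫ xb, ∫ xs, ∫ a, ∫ a', ∫ as,
          infoNCE f K (A a xb) (A a' xb) (fun k => A (as k) (xs k))
        ∂(Measure.pi fun _ : Fin K => PA) ∂PA ∂PA
        ∂(Measure.pi fun k => ρ (cs k)) ∂(ρ c)) +
      ∫ x, ⟪f x, f x - meanRep ρ f c⟫ ∂(ρ c) := by
  have hsup := supLoss_sub_le_integral_infoNCE (ρ := ρ) hA hfm hf hcent c cs
  split_ifs with h
  · simp only [h, CharP.cast_eq_zero, zero_add, log_one, add_zero]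
    linarith
  · linarith [log_colNum_add_one_le_supLoss (ρ := ρ) hfm (fun x => (hf x).le) c cs]

end Encoder

lemma clsWeight_nonneg {pr : Fin C → ℝ} (hpr : ∀ c, 0 ≤ pr c) {K : ℕ} (c : Fin C)
    (cs : Fin K → Fin C) : 0 ≤ clsWeight pr c cs :=
  mul_nonneg (hpr c) (Finset.prod_nonneg fun k _ => hpr (cs k))

lemma sum_clsWeight {pr : Fin C → ℝ} (hpr1 : ∑ c, pr c = 1) (K : ℕ) (c : Fin C) :
    ∑ cs : Fin K → Fin C, clsWeight pr c cs = pr c := by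
  simp only [clsWeight, ← Finset.mul_sum, ← Fintype.prod_sum, hpr1, Finset.prod_const_one, mul_one]

theorem sum_ite_supLoss_add_expLogCol_le {pr : Fin C → ℝ} (hpr : ∀ c, 0 ≤ pr c)
    (hpr1 : ∑ c, pr c = 1) {ρ : Fin C → Measure X} [∀ c, IsProbabilityMeasure (ρ c)]
    {PA : Measure Ω} [IsProbabilityMeasure PA] {A : Ω → X → X}
    (hA : Measurable fun p : Ω × X => A p.1 p.2) {f : X → EuclideanSpace ℝ (Fin d)}
    (hfm : Measurable f) (hf : ∀ x, ‖f x‖ = 1) (hcent : ∀ x, ∫ a, f (A a x) ∂PA = f x)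
    (K : ℕ) :
    (∑ c, ∑ cs : Fin K → Fin C,
        if colNum c cs = 0 then clsWeight pr c cs * supLoss ρ f c cs else 0) + expLogCol pr K ≤
      Run pr ρ PA A f K + ∑ c, pr c * ∫ x, ⟪f x, f x - meanRep ρ f c⟫ ∂(ρ c) := by
  simp only [expLogCol, Run, ← sum_clsWeight hpr1 K, Finset.sum_mul, ← Finset.sum_add_distrib]
  refine Finset.sum_le_sum fun c _ => Finset.sum_le_sum fun cs _ => ?_
  have := mul_le_mul_of_nonneg_left (ite_supLoss_add_log_colNum_le (ρ := ρ) hA hfm hf hcent c cs)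
    (clsWeight_nonneg hpr c cs)
  rwa [mul_add, mul_add, mul_ite, mul_zero] at this

theorem augmentation_aware_error_bound_improved_general
    (K : ℕ)
    (pr : Fin C → ℝ) (hpr : ∀ c, 0 ≤ pr c) (hpr1 : ∑ c, pr c = 1)
    (ρ : Fin C → Measure X) [∀ c, IsProbabilityMeasure (ρ c)]
    (PA : Measure Ω) [IsProbabilityMeasure PA]
    (A : Ω → X → X) (hA : Measurable fun p : Ω × X => A p.1 p.2)
    (f : X → EuclideanSpace ℝ (Fin d)) (hfm : Measurable f)
    (hf : ∀ x, ‖f x‖ = 1)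
    (hid : ∃ ω : Ω, A ω = id)
    (hTau : tauK pr K < 1)
    (hcent : ∀ xb : X, (∫ a, f (A a xb) ∂PA) = f xb)
    (hDminInt1 : ∀ xb xb' : X,
      Integrable (fun a => ⨅ a' : Ω, ‖f (A a xb) - f (A a' xb')‖) PA)
    (hDminInt2 : ∀ (c : Fin C) (xb : X),
      Integrable (fun xb' => ∫ a, (⨅ a' : Ω, ‖f (A a xb) - f (A a' xb')‖) ∂PA) (ρ c))
    (hDminInt3 : ∀ c : Fin C,
      Integrable
        (fun xb => ∫ xb', ∫ a, (⨅ a' : Ω, ‖f (A a xb) - f (A a' xb')‖) ∂PA ∂(ρ c)) (ρ c))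
    (hDmaxInt : ∀ c : Fin C,
      Integrable (fun xb' => ⨆ p : Ω × Ω, ‖f (A p.1 xb') - f (A p.2 xb')‖) (ρ c)) :
    Rsup pr ρ f K ≤ (1 / (1 - tauK pr K)) *
      (Run pr ρ PA A f K - expLogCol pr K + Dmin pr ρ PA A f + Dmax pr ρ A f) := by
  have hD : ∑ c, pr c * ∫ x, ⟪f x, f x - meanRep ρ f c⟫ ∂(ρ c) ≤
      Dmin pr ρ PA A f + Dmax pr ρ A f := by
    simp only [Dmin, Dmax, ← Finset.sum_add_distrib, ← mul_add]
    exact Finset.sum_le_sum fun c _ => mul_le_mul_of_nonneg_left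
      (integral_inner_sub_meanRep_le hA hfm (fun x => (hf x).le) hid hcent c hDminInt1
        (hDminInt2 c) (hDminInt3 c) (hDmaxInt c)) (hpr c)
  rw [Rsup, div_eq_inv_mul, one_div]
  exact mul_le_mul_of_nonneg_left
    (by linarith [sum_ite_supLoss_add_expLogCol_le (ρ := ρ) hpr hpr1 hA hfm hf hcent K])
    (inv_nonneg.2 (by linarith))

/-- **Theorem 2 (Improved augmentation-aware error bound).**
Under the additional centered-representation assumption
`E_{a~P_A} f(a(x̄)) = f(x̄)`, the coefficient of `D_max` improves from `5` to `1`: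
`R^sup(f) ≤ (1/(1−τ_K))·[R^un(f) − E log(Col+1) + D_min(f) + D_max(f)]`. -/
theorem augmentation_aware_error_bound_improved
    (K : ℕ) (hC : 1 ≤ C) (hK : 1 ≤ K)
    (pr : Fin C → ℝ) (hpr : ∀ c, 0 ≤ pr c) (hpr1 : ∑ c, pr c = 1)
    (ρ : Fin C → Measure X) [∀ c, IsProbabilityMeasure (ρ c)]
    (PA : Measure Ω) [IsProbabilityMeasure PA]
    (A : Ω → X → X) (hA : Measurable fun p : Ω × X => A p.1 p.2)
    (f : X → EuclideanSpace ℝ (Fin d)) (hfm : Measurable f)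
    (hf : ∀ x, ‖f x‖ = 1)
    (hid : ∃ ω : Ω, A ω = id)
    (hTau : tauK pr K < 1)
    (hcent : ∀ xb : X, (∫ a, f (A a xb) ∂PA) = f xb)
    (hDminInt1 : ∀ xb xb' : X,
      Integrable (fun a => ⨅ a' : Ω, ‖f (A a xb) - f (A a' xb')‖) PA)
    (hDminInt2 : ∀ (c : Fin C) (xb : X),
      Integrable (fun xb' => ∫ a, (⨅ a' : Ω, ‖f (A a xb) - f (A a' xb')‖) ∂PA) (ρ c))
    (hDminInt3 : ∀ c : Fin C,
      Integrable
        (fun xb => ∫ xb', ∫ a, (⨅ a' : Ω, ‖f (A a xb) - f (A a' xb')‖) ∂PA ∂(ρ c)) (ρ c))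
    (hDmaxInt : ∀ c : Fin C,
      Integrable (fun xb' => ⨆ p : Ω × Ω, ‖f (A p.1 xb') - f (A p.2 xb')‖) (ρ c)) :
    Rsup pr ρ f K ≤ (1 / (1 - tauK pr K)) *
      (Run pr ρ PA A f K - expLogCol pr K + Dmin pr ρ PA A f + Dmax pr ρ A f) :=
  augmentation_aware_error_bound_improved_general K pr hpr hpr1 ρ PA A hA f hfm hf hid hTau hcent
    hDminInt1 hDminInt2 hDminInt3 hDmaxInt

end
end

section
/- For any encoder f : 𝒳 → ℝ^d (with all relevant integrals existing), the intermediate supervised risk admits the analogous decomposition: R̄^sup(f) = E_{c~π} E_{x̄~ρ_c} Σ_{k=0}^{K} Σ_{(i_1,…,i_k) ∈ ([C]\{c})^k} p_k(i_1,…,i_k) · r_k^sup(i_1,…,i_k), where r_k^sup(i_1,…,i_k) = log(1 + (K−k) + Σ_{m=1}^k exp(−f(x̄)ᵀ(μ_c − μ_{i_m}))) and the k = 0 term is p_0 · log(1 + K). -/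
open MeasureTheory Real
open scoped BigOperators RealInnerProductSpace

noncomputable section

variable {X : Type*} [MeasurableSpace X] {Ω : Type*} [MeasurableSpace Ω] {d C : ℕ}

/-! The logistic loss sees the negative classes only through the sum `∑ₖ e(c_k)` with
`e(j) = exp(-uᵀ(μ_c - μ_j))`, so the expectation over `(c_1, …, c_K) ~ π^K` is the image of
`(∑_j π_j δ_{e(j)})^K` in the group algebra `ℝ[ℝ]` under the linear extension of `s ↦ log(1 + s)`.
Splitting off the anchor class, for which `e(c) = 1`, and applying the binomial theorem in this
commutative algebra produces exactly the weights `p_k`. -/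

section BinomialExpansion

open Finset AddMonoidAlgebra

variable {α R G : Type*} [CommSemiring R]

def AddMonoidAlgebra.linearExtension (φ : G → R) : AddMonoidAlgebra R G →+ R :=
  (Finsupp.linearCombination R φ).toAddMonoidHom.comp coeffAddEquiv.toAddMonoidHom

@[simp]
theorem AddMonoidAlgebra.linearExtension_single (φ : G → R) (s : G) (r : R) :
    linearExtension φ (single s r) = r * φ s :=
  Finsupp.linearCombination_single R r s

variable [AddCommMonoid G]

theorem AddMonoidAlgebra.linearExtension_sum_single_pow [Fintype α] (φ : G → R) (h : α → R)
    (e : α → G) (K : ℕ) :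
    linearExtension φ ((∑ a, single (e a) (h a)) ^ K) =
      ∑ g : Fin K → α, (∏ k, h (g k)) * φ (∑ k, e (g k)) := by
  simp [Fintype.sum_pow, prod_single]

theorem sum_pi_prod_mul_eq_sum_range_choose [Fintype α] [DecidableEq α] (φ : G → R) (h : α → R)
    (e : α → G) (c : α) (K : ℕ) :
    ∑ g : Fin K → α, (∏ k, h (g k)) * φ (∑ k, e (g k)) =
      ∑ k ∈ range (K + 1), ∑ i : Fin k → {a // a ≠ c},
        K.choose k * (∏ m, h (i m)) * h c ^ (K - k) * φ ((K - k) • e c + ∑ m, e (i m)) := by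
  rw [← linearExtension_sum_single_pow, Fintype.sum_eq_add_sum_subtype_ne _ c, add_comm, add_pow,
    map_sum]
  refine sum_congr rfl fun k _ => ?_
  rw [Fintype.sum_pow, single_pow, natCast_def]
  simp only [prod_single, sum_mul, single_mul_single, map_sum, linearExtension_single, add_zero]
  exact sum_congr rfl fun i _ => by rw [add_comm (∑ m, e (i m).1)]; ring

end BinomialExpansion

theorem integrable_comp_of_continuous_of_bounded {E : Type*} [NormedAddCommGroup E]
    [ProperSpace E] [MeasurableSpace E] [OpensMeasurableSpace E] {μ : Measure X}
    [IsFiniteMeasure μ] {f : X → E} (hf : Measurable f) (hfb : ∃ M : ℝ, ∀ x, ‖f x‖ ≤ M)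
    {g : E → ℝ} (hg : Continuous g) : Integrable (fun x => g (f x)) μ := by
  obtain ⟨M, hM⟩ := hfb
  obtain ⟨B, hB⟩ := (isCompact_closedBall 0 M).exists_bound_of_continuousOn hg.continuousOn
  exact .of_bound (hg.measurable.comp hf).aestronglyMeasurable B
    (ae_of_all _ fun x => hB _ (mem_closedBall_zero_iff.2 (hM x)))

theorem continuous_log_one_add_sum_exp_neg_inner {K : ℕ} (v : Fin K → EuclideanSpace ℝ (Fin d)) :
    Continuous fun u => Real.log (1 + ∑ k, Real.exp (-⟪u, v k⟫)) :=
  Continuous.log (by fun_prop) fun _ => by positivity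

theorem sum_clsWeight_mul_supLoss (pr : Fin C → ℝ) (ρ : Fin C → Measure X)
    {f : X → EuclideanSpace ℝ (Fin d)} (hfm : Measurable f) (hfb : ∃ M : ℝ, ∀ x, ‖f x‖ ≤ M)
    (K : ℕ) (c : Fin C) [IsFiniteMeasure (ρ c)] :
    ∑ cs : Fin K → Fin C, clsWeight pr c cs * supLoss ρ f c cs =
      pr c * ∫ xb, ∑ cs : Fin K → Fin C, (∏ k, pr (cs k)) *
        Real.log (1 + ∑ k, Real.exp (-⟪f xb, meanRep ρ f c - meanRep ρ f (cs k)⟫)) ∂(ρ c) := by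
  have hint (cs : Fin K → Fin C) := integrable_comp_of_continuous_of_bounded (μ := ρ c) hfm hfb
    (continuous_log_one_add_sum_exp_neg_inner fun k => meanRep ρ f c - meanRep ρ f (cs k))
  simp only [clsWeight, supLoss, mul_assoc, ← integral_const_mul]
  rw [← integral_finsetSum _ fun cs _ => ((hint cs).const_mul _).const_mul _]
  simp only [Finset.mul_sum]

theorem sum_prod_mul_log_eq_sum_pWeight_mul_rkSup (pr : Fin C → ℝ) (ρ : Fin C → Measure X)
    (f : X → EuclideanSpace ℝ (Fin d)) (K : ℕ) (c : Fin C) (u : EuclideanSpace ℝ (Fin d)) :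
    ∑ cs : Fin K → Fin C, (∏ k, pr (cs k)) *
        Real.log (1 + ∑ k, Real.exp (-⟪u, meanRep ρ f c - meanRep ρ f (cs k)⟫)) =
      ∑ k ∈ Finset.range (K + 1), ∑ i : Fin k → {j : Fin C // j ≠ c},
        pWeight pr K c k (fun m => (i m).1) * rkSup ρ f K c u k (fun m => (i m).1) := by
  rw [sum_pi_prod_mul_eq_sum_range_choose (fun s => Real.log (1 + s)) pr
    (fun j => Real.exp (-⟪u, meanRep ρ f c - meanRep ρ f j⟫)) c]
  simp [pWeight, rkSup, add_assoc]

theorem intermediate_supervised_risk_decomposition_general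
    (K : ℕ)
    (pr : Fin C → ℝ)
    (ρ : Fin C → Measure X) [∀ c, IsProbabilityMeasure (ρ c)]
    (f : X → EuclideanSpace ℝ (Fin d)) (hfm : Measurable f)
    (hfb : ∃ M : ℝ, ∀ x : X, ‖f x‖ ≤ M) :
    Rbarsup pr ρ f K =
      ∑ c, pr c *
        ∫ xb,
          (∑ k ∈ Finset.range (K + 1), ∑ i : Fin k → {j : Fin C // j ≠ c},
            pWeight pr K c k (fun m => (i m).1) *
              rkSup ρ f K c (f xb) k (fun m => (i m).1))
        ∂(ρ c) := by
  refine Finset.sum_congr rfl fun c _ => ?_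
  simp only [sum_clsWeight_mul_supLoss pr ρ hfm hfb, sum_prod_mul_log_eq_sum_pWeight_mul_rkSup]

/-- **Corollary (Error decomposition of `R̄^sup`).**
The intermediate supervised risk decomposes as
`R̄^sup(f) = E_c E_{x̄~ρ_c} Σ_{k=0}^K Σ_{(i_1,…,i_k)∈([C]\{c})^k} p_k(i)·r_k^sup(i)`,
with `r_k^sup(i_1,…,i_k) = log(1 + (K−k) + Σ_{m=1}^k exp(−f(x̄)ᵀ(μ_c − μ_{i_m})))`
(the `k = 0` term being `p_0 · log(1 + K)`). -/
theorem intermediate_supervised_risk_decomposition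
    (K : ℕ) (hC : 1 ≤ C) (hK : 1 ≤ K)
    (pr : Fin C → ℝ) (hpr : ∀ c, 0 ≤ pr c) (hpr1 : ∑ c, pr c = 1)
    (ρ : Fin C → Measure X) [∀ c, IsProbabilityMeasure (ρ c)]
    (f : X → EuclideanSpace ℝ (Fin d)) (hfm : Measurable f)
    (hfb : ∃ M : ℝ, ∀ x : X, ‖f x‖ ≤ M) :
    Rbarsup pr ρ f K =
      ∑ c, pr c *
        ∫ xb,
          (∑ k ∈ Finset.range (K + 1), ∑ i : Fin k → {j : Fin C // j ≠ c},
            pWeight pr K c k (fun m => (i m).1) *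
              rkSup ρ f K c (f xb) k (fun m => (i m).1))
        ∂(ρ c) :=
  intermediate_supervised_risk_decomposition_general K pr ρ f hfm hfb

end
end

section
/- Let f : 𝒳 → ℝ^d be an encoder with ‖f(x)‖ = 1 for all x ∈ 𝒳 and assume the identity map belongs to 𝒜. Fix c ∈ [C], x̄ ∈ 𝒳, a ∈ 𝒜, k ∈ {0,…,K} and i_1,…,i_k ∈ [C]\{c}. Then the inner risk satisfies r_k(i_1,…,i_k) ≥ r_k^sup(i_1,…,i_k) − [ 2·‖f(a(x̄)) − f(x̄)‖ + 2·E_{x̄'~ρ_c} sup_{a',a''∈𝒜} ‖f(a''(x̄')) − f(a'(x̄'))‖ + max_{m∈[k]} E_{x̄_m~ρ_{i_m}} sup_{a',a''∈𝒜} ‖f(a''(x̄_m)) − f(a'(x̄_m))‖ + E_{x̄'~ρ_c} E_{a'~P_A} inf_{a''∈𝒜} ‖f(a'(x̄)) − f(a''(x̄'))‖ ], where r_k^sup(i_1,…,i_k) = log(1 + (K−k) + Σ_{m=1}^k exp(−f(x̄)ᵀ(μ_c − μ_{i_m}))). -/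
open MeasureTheory Real
open scoped BigOperators RealInnerProductSpace

noncomputable section

variable {X : Type*} [MeasurableSpace X] {Ω : Type*} [MeasurableSpace Ω] {d C : ℕ}

/-!
Write `m(x) = E_{a'} f(a'(x))` for the augmented mean of an image and `ν_l = E_{x ~ ρ_l} m(x)`
for the augmented class means. The InfoNCE loss is `ℓ(t) = log (1 + Σ_j exp t_j)` at the score
differences, and `ℓ` is convex. Replacing the anchor `f(a(x̄))` by `f(x̄)` and the positive
`f(a'(x̄))` by `ν_c` moves every score by at most `2‖f(a(x̄)) - f(x̄)‖ + ‖f(a'(x̄)) - ν_c‖`.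
Jensen's inequality, first over the augmentations of the negatives and then over the negatives
themselves, bounds the inner risk below by `ℓ(⟨f(x̄), ν_{i_j} - ν_c⟩)_j` minus that error.
The triangle inequality through the closest augmentation bounds `E ‖f(a'(x̄)) - ν_c‖` by the
`inf` term plus the `sup` term of class `c`. Since the identity is an augmentation,
`‖ν_l - μ_l‖ ≤ E_{x ~ ρ_l} sup_{a', a''} ‖f(a''(x)) - f(a'(x))‖`, which turns
`ℓ(⟨f(x̄), ν_{i_j} - ν_c⟩)` into `r_k^sup` at the cost of the remaining two terms.
-/

open Finset

section LogOneAddSumExp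

variable {ι : Type*} [Fintype ι]

def logOneAddSumExp (t : ι → ℝ) : ℝ := log (1 + ∑ j, exp (t j))

lemma one_add_sum_exp_pos (t : ι → ℝ) : 0 < 1 + ∑ j, exp (t j) := by positivity

lemma logOneAddSumExp_nonneg (t : ι → ℝ) : 0 ≤ logOneAddSumExp t :=
  log_nonneg (le_add_of_nonneg_right (by positivity))

lemma continuous_logOneAddSumExp : Continuous (logOneAddSumExp (ι := ι)) :=
  (continuous_const.add (by fun_prop)).log fun t => (one_add_sum_exp_pos t).ne'

lemma logOneAddSumExp_le_add {s t : ι → ℝ} {δ : ℝ} (hδ : 0 ≤ δ) (h : ∀ j, s j ≤ t j + δ) :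
    logOneAddSumExp s ≤ logOneAddSumExp t + δ := by
  have hsum : 1 + ∑ j, exp (s j) ≤ (1 + ∑ j, exp (t j)) * exp δ :=
    calc 1 + ∑ j, exp (s j) ≤ exp δ + ∑ j, exp (t j) * exp δ :=
          add_le_add (one_le_exp hδ)
            (sum_le_sum fun j _ => by rw [← exp_add]; exact exp_le_exp.2 (h j))
      _ = (1 + ∑ j, exp (t j)) * exp δ := by rw [add_mul, sum_mul, one_mul]
  calc logOneAddSumExp s ≤ log ((1 + ∑ j, exp (t j)) * exp δ) :=
        log_le_log (one_add_sum_exp_pos s) hsum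
    _ = logOneAddSumExp t + δ := by
        rw [log_mul (one_add_sum_exp_pos t).ne' (exp_pos δ).ne', log_exp, logOneAddSumExp]

lemma logOneAddSumExp_le_add_norm (t : ι → ℝ) :
    logOneAddSumExp t ≤ logOneAddSumExp (0 : ι → ℝ) + ‖t‖ :=
  logOneAddSumExp_le_add (norm_nonneg t) fun j =>
    by simpa using (le_abs_self (t j)).trans (norm_le_pi_norm t j)

lemma logOneAddSumExp_add_sum_softmax_mul_le (s t : ι → ℝ) :
    logOneAddSumExp s + ∑ j, exp (s j) / (1 + ∑ i, exp (s i)) * (t j - s j) ≤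
      logOneAddSumExp t := by
  set Z := 1 + ∑ i, exp (s i)
  have hZ : 0 < Z := one_add_sum_exp_pos s
  -- Jensen for `exp` with the softmax weights of `s`, plus the weight `1 / Z` placed at `0`.
  let w : Option ι → ℝ := fun o => o.elim (1 / Z) fun j => exp (s j) / Z
  let p : Option ι → ℝ := fun o => o.elim 0 fun j => t j - s j
  have hjensen := convexOn_exp.map_sum_le (t := univ) (w := w) (p := p)
    (fun o _ => by cases o <;> simp only [w, Option.elim] <;> positivity)
    (by simp only [w, Fintype.sum_option, Option.elim, ← sum_div, ← add_div]; exact div_self hZ.ne')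
    (by simp)
  simp only [w, p, Fintype.sum_option, Option.elim, smul_eq_mul, mul_zero, zero_add, exp_zero,
    mul_one] at hjensen
  have hrhs : 1 / Z + ∑ j, exp (s j) / Z * exp (t j - s j) = (1 + ∑ j, exp (t j)) / Z := by
    rw [add_div, sum_div]
    congr 1
    refine sum_congr rfl fun j _ => ?_
    rw [exp_sub]
    field_simp
  rw [hrhs, ← le_log_iff_exp_le (div_pos (one_add_sum_exp_pos t) hZ),
    log_div (one_add_sum_exp_pos t).ne' hZ.ne'] at hjensen
  unfold logOneAddSumExp
  linarith

lemma convexOn_logOneAddSumExp : ConvexOn ℝ Set.univ (logOneAddSumExp (ι := ι)) := by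
  refine ⟨convex_univ, fun x _ y _ a b ha hb hab => ?_⟩
  set z := a • x + b • y
  have hx := logOneAddSumExp_add_sum_softmax_mul_le z x
  have hy := logOneAddSumExp_add_sum_softmax_mul_le z y
  set w := fun j => exp (z j) / (1 + ∑ i, exp (z i))
  have hcancel : a * ∑ j, w j * (x j - z j) + b * ∑ j, w j * (y j - z j) = 0 := by
    rw [mul_sum, mul_sum, ← sum_add_distrib]
    refine sum_eq_zero fun j _ => ?_
    simp only [z, Pi.add_apply, Pi.smul_apply, smul_eq_mul]
    linear_combination (-(w j) * (a * x j + b * y j)) * hab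
  calc logOneAddSumExp z
      = a * (logOneAddSumExp z + ∑ j, w j * (x j - z j)) +
          b * (logOneAddSumExp z + ∑ j, w j * (y j - z j)) := by
        linear_combination (-1 : ℝ) * hcancel - logOneAddSumExp z * hab
    _ ≤ a • logOneAddSumExp x + b • logOneAddSumExp y :=
        add_le_add (mul_le_mul_of_nonneg_left hx ha) (mul_le_mul_of_nonneg_left hy hb)

variable {α : Type*} [MeasurableSpace α] {μ : Measure α}

lemma MeasureTheory.Integrable.logOneAddSumExp_comp [IsFiniteMeasure μ] {T : α → ι → ℝ}
    (hT : Integrable T μ) :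
    Integrable (fun z => logOneAddSumExp (T z)) μ := by
  refine ((integrable_const (logOneAddSumExp (0 : ι → ℝ))).add hT.norm).mono'
    (continuous_logOneAddSumExp.comp_aestronglyMeasurable hT.aestronglyMeasurable) ?_
  refine ae_of_all _ fun z => ?_
  rw [Real.norm_of_nonneg (logOneAddSumExp_nonneg _)]
  exact logOneAddSumExp_le_add_norm (T z)

lemma logOneAddSumExp_integral_le [IsProbabilityMeasure μ] {T : α → ι → ℝ}
    (hT : ∀ j, Integrable (fun z => T z j) μ) :
    logOneAddSumExp (fun j => ∫ z, T z j ∂μ) ≤ ∫ z, logOneAddSumExp (T z) ∂μ := by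
  have hTi : Integrable T μ := Integrable.of_eval hT
  have h := convexOn_logOneAddSumExp.map_integral_le continuous_logOneAddSumExp.continuousOn
    isClosed_univ (ae_of_all _ fun _ => Set.mem_univ _) hTi (by exact hTi.logOneAddSumExp_comp)
  rwa [show ∫ z, T z ∂μ = fun j => ∫ z, T z j ∂μ from funext (eval_integral hT)] at h

lemma integrable_logOneAddSumExp_pi {β : Type*} [MeasurableSpace β]
    {ν : ι → Measure β} [∀ j, IsProbabilityMeasure (ν j)] {g : ι → β → ℝ}
    (hg : ∀ j, Integrable (g j) (ν j)) :
    Integrable (fun z => logOneAddSumExp fun j => g j (z j)) (Measure.pi ν) := by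
  have hT : Integrable (fun z j => g j (z j)) (Measure.pi ν) :=
    Integrable.of_eval fun j => integrable_comp_eval (hg j)
  exact hT.logOneAddSumExp_comp

lemma logOneAddSumExp_integral_le_integral_pi {β : Type*} [MeasurableSpace β]
    {ν : ι → Measure β} [∀ j, IsProbabilityMeasure (ν j)] {g : ι → β → ℝ}
    (hg : ∀ j, Integrable (g j) (ν j)) :
    logOneAddSumExp (fun j => ∫ y, g j y ∂ν j) ≤
      ∫ z, logOneAddSumExp (fun j => g j (z j)) ∂Measure.pi ν := by
  refine le_of_eq_of_le (congrArg logOneAddSumExp (funext fun j => ?_))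
    (logOneAddSumExp_integral_le (μ := Measure.pi ν) (T := fun z j => g j (z j))
      fun j => integrable_comp_eval (hg j))
  exact (integral_comp_eval (hg j).aestronglyMeasurable).symm

end LogOneAddSumExp

lemma norm_integral_le_of_forall_norm_le {α F : Type*} [MeasurableSpace α] {μ : Measure α}
    [IsProbabilityMeasure μ] [NormedAddCommGroup F] [NormedSpace ℝ F] {g : α → F} {B : ℝ}
    (h : ∀ x, ‖g x‖ ≤ B) : ‖∫ x, g x ∂μ‖ ≤ B := by
  simpa using norm_integral_le_of_norm_le_const (μ := μ) (ae_of_all μ h)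

lemma integrable_integral_prod_right_of_norm_le {α β : Type*} [MeasurableSpace α]
    [MeasurableSpace β] {μ : Measure α} {ν : Measure β} [IsFiniteMeasure μ]
    [IsProbabilityMeasure ν] {F : α × β → ℝ} (hF : StronglyMeasurable F) {B : ℝ}
    (hB : ∀ p, ‖F p‖ ≤ B) : Integrable (fun a => ∫ b, F (a, b) ∂ν) μ :=
  Integrable.of_bound hF.integral_prod_right'.aestronglyMeasurable B
    (ae_of_all _ fun a => norm_integral_le_of_forall_norm_le fun b => hB (a, b))

section InnerProduct

variable {E : Type*} [NormedAddCommGroup E] [InnerProductSpace ℝ E]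

lemma abs_real_inner_le_norm_of_norm_le_one {u : E} (hu : ‖u‖ ≤ 1) (w : E) :
    |⟪u, w⟫| ≤ ‖w‖ :=
  (abs_real_inner_le_norm u w).trans (mul_le_of_le_one_left (norm_nonneg w) hu)

/-- With `u = f(x̄)`, `u' = f(a(x̄))`, `v = f(a'(x̄))` and `w` the representation of a negative,
this compares a score centred at `ν` with the InfoNCE score of the augmented anchor. -/
lemma inner_sub_le_neg_inner_add {u u' v w : E} (ν : E) (hu : ‖u‖ ≤ 1) (hv : ‖v‖ ≤ 1)
    (hw : ‖w‖ ≤ 1) : ⟪u, w - ν⟫ ≤ -⟪u', v - w⟫ + (2 * ‖u' - u‖ + ‖v - ν‖) := by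
  have hsplit : ⟪u, w - ν⟫ + ⟪u', v - w⟫ = ⟪u' - u, v - w⟫ + ⟪u, v - ν⟫ := by
    simp only [inner_sub_left, inner_sub_right]; ring
  have hvw : ‖v - w‖ ≤ 2 := (norm_sub_le v w).trans (by linarith)
  have h1 : ⟪u' - u, v - w⟫ ≤ 2 * ‖u' - u‖ :=
    (real_inner_le_norm _ _).trans (by nlinarith [norm_nonneg (u' - u)])
  have h2 : ⟪u, v - ν⟫ ≤ ‖v - ν‖ :=
    (le_abs_self _).trans (abs_real_inner_le_norm_of_norm_le_one hu _)
  linarith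

lemma integral_inner_sub {α : Type*} [MeasurableSpace α] {μ : Measure α} [IsProbabilityMeasure μ]
    [CompleteSpace E] {h : α → E} (hh : Integrable h μ) (u ν : E) :
    ∫ x, ⟪u, h x - ν⟫ ∂μ = ⟪u, (∫ x, h x ∂μ) - ν⟫ := by
  have hsub : Integrable (fun x => h x - ν) μ := hh.sub (integrable_const ν)
  rw [integral_inner hsub, integral_sub hh (integrable_const ν),
    integral_const, probReal_univ, one_smul]

end InnerProduct

section PadTuple

variable {β : Type*} {k K : ℕ}

def padTuple (i : Fin k → β) (b : β) (j : Fin K) : β :=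
  if h : (j : ℕ) < k then i ⟨j, h⟩ else b

lemma sum_padTuple {M : Type*} [AddCommMonoid M] (i : Fin k → β) (b : β) (G : β → M)
    (hk : k ≤ K) : ∑ j : Fin K, G (padTuple i b j) = (K - k) • G b + ∑ m, G (i m) := by
  let g : ℕ → M := fun n => if h : n < k then G (i ⟨n, h⟩) else G b
  have hhead : ∑ n ∈ range k, g n = ∑ m, G (i m) := by
    rw [← Fin.sum_univ_eq_sum_range g k]
    exact sum_congr rfl fun m _ => by simp [g]
  have htail : ∑ n ∈ Ico k K, g n = (K - k) • G b := by
    rw [sum_congr rfl fun n hn => dif_neg (mem_Ico.1 hn).1.not_gt,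
      sum_const, Nat.card_Ico]
  calc ∑ j : Fin K, G (padTuple i b j) = ∑ n ∈ range K, g n := by
        rw [← Fin.sum_univ_eq_sum_range g K]
        exact sum_congr rfl fun j _ => by
          simp only [padTuple, g]; split_ifs <;> rfl
    _ = (K - k) • G b + ∑ m, G (i m) := by
        rw [← sum_range_add_sum_Ico g hk, hhead, htail, add_comm]

end PadTuple

section Augmentation

variable {α Θ E : Type*} [NormedAddCommGroup E]

def augDiam (A : Θ → α → α) (f : α → E) (x : α) : ℝ :=
  ⨆ p : Θ × Θ, ‖f (A p.1 x) - f (A p.2 x)‖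

def augMean [NormedSpace ℝ E] [MeasurableSpace Θ] (PA : Measure Θ) (A : Θ → α → α) (f : α → E)
    (x : α) : E :=
  ∫ ω, f (A ω x) ∂PA

variable {A : Θ → α → α} {f : α → E}

lemma norm_sub_le_augDiam (hf : ∀ x, ‖f x‖ ≤ 1) (x : α) (ω ω' : Θ) :
    ‖f (A ω x) - f (A ω' x)‖ ≤ augDiam A f x :=
  le_ciSup (f := fun p : Θ × Θ => ‖f (A p.1 x) - f (A p.2 x)‖)
    ⟨2, by
      rintro r ⟨p, rfl⟩
      exact (norm_sub_le _ _).trans (by linarith [hf (A p.1 x), hf (A p.2 x)])⟩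
    (ω, ω')

variable [MeasurableSpace Θ] {PA : Measure Θ} [IsProbabilityMeasure PA]

lemma norm_augMean_le [NormedSpace ℝ E] (hf : ∀ x, ‖f x‖ ≤ 1) (x : α) :
    ‖augMean PA A f x‖ ≤ 1 :=
  norm_integral_le_of_forall_norm_le fun _ => hf _

variable [MeasurableSpace α] [MeasurableSpace E] [OpensMeasurableSpace E]
  [SecondCountableTopology E]

lemma integrable_comp_augmentation (hfA : Measurable fun p : Θ × α => f (A p.1 p.2))
    (hf : ∀ x, ‖f x‖ ≤ 1) (x : α) : Integrable (fun ω => f (A ω x)) PA :=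
  Integrable.of_bound (hfA.comp (measurable_id.prodMk measurable_const)).aestronglyMeasurable 1
    (ae_of_all _ fun _ => hf _)

variable [NormedSpace ℝ E]

lemma stronglyMeasurable_augMean (hfA : Measurable fun p : Θ × α => f (A p.1 p.2)) :
    StronglyMeasurable (augMean PA A f) :=
  (hfA.comp measurable_swap).stronglyMeasurable.integral_prod_right'

lemma integrable_augMean {μ : Measure α} [IsFiniteMeasure μ]
    (hfA : Measurable fun p : Θ × α => f (A p.1 p.2)) (hf : ∀ x, ‖f x‖ ≤ 1) :
    Integrable (augMean PA A f) μ :=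
  Integrable.of_bound (stronglyMeasurable_augMean (PA := PA) hfA).aestronglyMeasurable 1
    (ae_of_all _ (norm_augMean_le (PA := PA) hf))

variable [CompleteSpace E]

lemma norm_sub_augMean_le_augDiam (hfA : Measurable fun p : Θ × α => f (A p.1 p.2))
    (hf : ∀ x, ‖f x‖ ≤ 1) (ω : Θ) (x : α) : ‖f (A ω x) - augMean PA A f x‖ ≤ augDiam A f x := by
  have hrepr : f (A ω x) - augMean PA A f x = ∫ ω', (f (A ω x) - f (A ω' x)) ∂PA := by
    rw [integral_sub (integrable_const _) (integrable_comp_augmentation hfA hf x), integral_const,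
      probReal_univ, one_smul, augMean]
  rw [hrepr]
  exact norm_integral_le_of_forall_norm_le fun ω' => norm_sub_le_augDiam hf x ω ω'

lemma norm_sub_augMean_le_iInf_add_augDiam [Nonempty Θ]
    (hfA : Measurable fun p : Θ × α => f (A p.1 p.2)) (hf : ∀ x, ‖f x‖ ≤ 1) (v : E) (x : α) :
    ‖v - augMean PA A f x‖ ≤ (⨅ ω, ‖v - f (A ω x)‖) + augDiam A f x := by
  have h : ‖v - augMean PA A f x‖ - augDiam A f x ≤ ⨅ ω, ‖v - f (A ω x)‖ :=
    le_ciInf fun ω => by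
      linarith [norm_sub_le_norm_sub_add_norm_sub v (f (A ω x)) (augMean PA A f x),
        norm_sub_augMean_le_augDiam (PA := PA) hfA hf ω x]
  linarith

variable {μ : Measure α} [IsProbabilityMeasure μ]

lemma norm_integral_augMean_sub_integral_le (hfm : Measurable f)
    (hfA : Measurable fun p : Θ × α => f (A p.1 p.2)) (hf : ∀ x, ‖f x‖ ≤ 1)
    (hid : ∃ ω₀, A ω₀ = id) (hdiam : Integrable (augDiam A f) μ) :
    ‖(∫ x, augMean PA A f x ∂μ) - ∫ x, f x ∂μ‖ ≤ ∫ x, augDiam A f x ∂μ := by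
  obtain ⟨ω₀, hω₀⟩ := hid
  have hfi : Integrable f μ := Integrable.of_bound hfm.aestronglyMeasurable 1 (ae_of_all _ hf)
  rw [← integral_sub (integrable_augMean hfA hf) hfi]
  refine (norm_integral_le_integral_norm _).trans (integral_mono_of_nonneg
    (ae_of_all _ fun _ => norm_nonneg _) hdiam (ae_of_all _ fun x => ?_))
  simpa [norm_sub_rev, hω₀] using norm_sub_augMean_le_augDiam hfA hf ω₀ x

lemma integral_norm_sub_integral_augMean_le [Nonempty Θ]
    (hfA : Measurable fun p : Θ × α => f (A p.1 p.2)) (hf : ∀ x, ‖f x‖ ≤ 1)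
    {v : Θ → E} (hv : Measurable v) (hvb : ∀ ω, ‖v ω‖ ≤ 1)
    (hinf : ∀ x, Integrable (fun ω' => ⨅ ω, ‖v ω' - f (A ω x)‖) PA)
    (hinf' : Integrable (fun x => ∫ ω', (⨅ ω, ‖v ω' - f (A ω x)‖) ∂PA) μ)
    (hdiam : Integrable (augDiam A f) μ) :
    ∫ ω', ‖v ω' - ∫ x, augMean PA A f x ∂μ‖ ∂PA ≤
      (∫ x, ∫ ω', (⨅ ω, ‖v ω' - f (A ω x)‖) ∂PA ∂μ) + ∫ x, augDiam A f x ∂μ := by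
  set Ψ : Θ × α → ℝ := fun p => ‖v p.1 - augMean PA A f p.2‖
  have hΨ : Integrable Ψ (PA.prod μ) :=
    Integrable.of_bound ((hv.comp measurable_fst).aestronglyMeasurable.sub
      ((stronglyMeasurable_augMean hfA).comp_measurable measurable_snd).aestronglyMeasurable).norm
      2 (ae_of_all _ fun p => by
        rw [norm_norm]
        exact (norm_sub_le _ _).trans
          (by linarith [hvb p.1, norm_augMean_le (PA := PA) (A := A) hf p.2]))
  have hfirst : ∀ ω', ‖v ω' - ∫ x, augMean PA A f x ∂μ‖ ≤ ∫ x, Ψ (ω', x) ∂μ := fun ω' => by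
    have hrepr : v ω' - ∫ x, augMean PA A f x ∂μ = ∫ x, (v ω' - augMean PA A f x) ∂μ := by
      rw [integral_sub (integrable_const _) (integrable_augMean hfA hf), integral_const,
        probReal_univ, one_smul]
    rw [hrepr]
    exact norm_integral_le_integral_norm _
  have hsecond : ∀ x, ∫ ω', Ψ (ω', x) ∂PA ≤
      (∫ ω', (⨅ ω, ‖v ω' - f (A ω x)‖) ∂PA) + augDiam A f x := fun x => by
    have h := integral_mono_of_nonneg (μ := PA)
      (ae_of_all _ fun ω' => norm_nonneg (v ω' - augMean PA A f x))
      ((hinf x).add (integrable_const (augDiam A f x)))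
      (ae_of_all _ fun ω' => norm_sub_augMean_le_iInf_add_augDiam hfA hf (v ω') x)
    simp only [Pi.add_apply] at h
    rwa [integral_add (hinf x) (integrable_const _), integral_const, probReal_univ,
      one_smul] at h
  calc ∫ ω', ‖v ω' - ∫ x, augMean PA A f x ∂μ‖ ∂PA ≤ ∫ ω', ∫ x, Ψ (ω', x) ∂μ ∂PA :=
        integral_mono_of_nonneg (ae_of_all _ fun _ => norm_nonneg _) hΨ.integral_prod_left
          (ae_of_all _ hfirst)
    _ = ∫ x, ∫ ω', Ψ (ω', x) ∂PA ∂μ := integral_integral_swap hΨ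
    _ ≤ ∫ x, ((∫ ω', (⨅ ω, ‖v ω' - f (A ω x)‖) ∂PA) + augDiam A f x) ∂μ :=
        integral_mono_of_nonneg (ae_of_all _ fun _ => integral_nonneg fun _ => norm_nonneg _)
          (hinf'.add hdiam) (ae_of_all _ hsecond)
    _ = _ := integral_add hinf' hdiam

end Augmentation

section InfoNCE

variable {K : ℕ}

lemma infoNCE_eq_logOneAddSumExp {α : Type*} (f : α → EuclideanSpace ℝ (Fin d)) (x x' : α)
    (xs : Fin K → α) :
    infoNCE f K x x' xs = logOneAddSumExp fun j => -⟪f x, f x' - f (xs j)⟫ := rfl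

lemma norm_infoNCE_le {α : Type*} {f : α → EuclideanSpace ℝ (Fin d)} (hf : ∀ x, ‖f x‖ ≤ 1)
    (x x' : α) (xs : Fin K → α) :
    ‖infoNCE f K x x' xs‖ ≤ logOneAddSumExp (0 : Fin K → ℝ) + 2 := by
  rw [infoNCE_eq_logOneAddSumExp, Real.norm_of_nonneg (logOneAddSumExp_nonneg _)]
  refine logOneAddSumExp_le_add zero_le_two fun j => ?_
  have hinner := abs_real_inner_le_norm_of_norm_le_one (hf x) (f x' - f (xs j))
  have hdiff : ‖f x' - f (xs j)‖ ≤ 2 := (norm_sub_le _ _).trans (by linarith [hf x', hf (xs j)])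
  simp only [Pi.zero_apply, zero_add]
  linarith [neg_abs_le ⟪f x, f x' - f (xs j)⟫]

variable {f : X → EuclideanSpace ℝ (Fin d)}

lemma measurable_infoNCE (hfm : Measurable f) :
    Measurable fun p : X × X × (Fin K → X) => infoNCE f K p.1 p.2.1 p.2.2 := by
  simp_rw [infoNCE_eq_logOneAddSumExp]
  exact continuous_logOneAddSumExp.measurable.comp (measurable_pi_lambda _ fun j => by fun_prop)

variable {PA : Measure Ω} [IsProbabilityMeasure PA] {A : Ω → X → X}

lemma logOneAddSumExp_inner_augMean_sub_le_integral_infoNCE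
    (hA : Measurable fun p : Ω × X => A p.1 p.2) (hfm : Measurable f) (hf : ∀ x, ‖f x‖ ≤ 1)
    {u : EuclideanSpace ℝ (Fin d)} (ν : EuclideanSpace ℝ (Fin d)) (hu : ‖u‖ ≤ 1)
    (x x' : X) (xs : Fin K → X) :
    logOneAddSumExp (fun j => ⟪u, augMean PA A f (xs j) - ν⟫) ≤
      ∫ as, infoNCE f K x x' (fun j => A (as j) (xs j)) ∂Measure.pi (fun _ => PA) +
        (2 * ‖f x - u‖ + ‖f x' - ν‖) := by
  have hfA : Measurable fun p : Ω × X => f (A p.1 p.2) := hfm.comp hA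
  have hg : ∀ j, Integrable (fun ω => ⟪u, f (A ω (xs j)) - ν⟫) PA := fun j =>
    ((integrable_comp_augmentation hfA hf (xs j)).sub (integrable_const ν)).const_inner u
  have hL : Integrable (fun as : Fin K → Ω => infoNCE f K x x' fun j => A (as j) (xs j))
      (Measure.pi fun _ => PA) :=
    Integrable.of_bound ((measurable_infoNCE hfm).comp
      (f := fun as : Fin K → Ω => (x, x', fun j => A (as j) (xs j)))
      (by fun_prop)).aestronglyMeasurable _ (ae_of_all _ fun _ => norm_infoNCE_le hf _ _ _)
  have hδ : 0 ≤ 2 * ‖f x - u‖ + ‖f x' - ν‖ := by positivity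
  calc logOneAddSumExp (fun j => ⟪u, augMean PA A f (xs j) - ν⟫)
      = logOneAddSumExp (fun j => ∫ ω, ⟪u, f (A ω (xs j)) - ν⟫ ∂PA) := by
        simp only [integral_inner_sub (integrable_comp_augmentation hfA hf _), augMean]
    _ ≤ ∫ as, logOneAddSumExp (fun j => ⟪u, f (A (as j) (xs j)) - ν⟫) ∂Measure.pi fun _ => PA :=
        logOneAddSumExp_integral_le_integral_pi hg
    _ ≤ ∫ as, (infoNCE f K x x' (fun j => A (as j) (xs j)) + (2 * ‖f x - u‖ + ‖f x' - ν‖))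
          ∂Measure.pi fun _ => PA :=
        integral_mono_of_nonneg (ae_of_all _ fun _ => logOneAddSumExp_nonneg _)
          (hL.add (integrable_const _)) (ae_of_all _ fun as =>
            logOneAddSumExp_le_add hδ fun j => inner_sub_le_neg_inner_add ν hu (hf _) (hf _))
    _ = _ := by rw [integral_add hL (integrable_const _), integral_const, probReal_univ, one_smul]

lemma logOneAddSumExp_inner_augMean_sub_le_integral_integral_infoNCE
    (hA : Measurable fun p : Ω × X => A p.1 p.2) (hfm : Measurable f) (hf : ∀ x, ‖f x‖ ≤ 1)
    {u : EuclideanSpace ℝ (Fin d)} (ν : EuclideanSpace ℝ (Fin d)) (hu : ‖u‖ ≤ 1)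
    (x xb : X) (xs : Fin K → X) :
    logOneAddSumExp (fun j => ⟪u, augMean PA A f (xs j) - ν⟫) -
        (2 * ‖f x - u‖ + ∫ a', ‖f (A a' xb) - ν‖ ∂PA) ≤
      ∫ a', ∫ as, infoNCE f K x (A a' xb) (fun j => A (as j) (xs j))
        ∂(Measure.pi fun _ => PA) ∂PA := by
  have hψ : Integrable (fun a' => ‖f (A a' xb) - ν‖) PA :=
    ((integrable_comp_augmentation (hfm.comp hA) hf xb).sub (integrable_const ν)).norm
  have hG : Integrable (fun a' => ∫ as, infoNCE f K x (A a' xb) (fun j => A (as j) (xs j))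
      ∂(Measure.pi fun _ => PA)) PA :=
    integrable_integral_prod_right_of_norm_le ((measurable_infoNCE hfm).comp
      (f := fun p : Ω × (Fin K → Ω) => (x, A p.1 xb, fun j => A (p.2 j) (xs j)))
      (by fun_prop)).stronglyMeasurable fun _ => norm_infoNCE_le hf _ _ _
  calc logOneAddSumExp (fun j => ⟪u, augMean PA A f (xs j) - ν⟫) -
        (2 * ‖f x - u‖ + ∫ a', ‖f (A a' xb) - ν‖ ∂PA)
      = ∫ a', (logOneAddSumExp (fun j => ⟪u, augMean PA A f (xs j) - ν⟫) -
          2 * ‖f x - u‖ - ‖f (A a' xb) - ν‖) ∂PA := by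
        rw [integral_sub (integrable_const _) hψ, integral_const, probReal_univ, one_smul]
        ring
    _ ≤ _ := integral_mono ((integrable_const _).sub hψ) hG fun a' => by
        linarith [logOneAddSumExp_inner_augMean_sub_le_integral_infoNCE (PA := PA) hA hfm hf ν hu
          x (A a' xb) xs]

end InfoNCE

section InnerRisk

variable {K k : ℕ} {ρ : Fin C → Measure X} {f : X → EuclideanSpace ℝ (Fin d)}

lemma rkSup_eq_logOneAddSumExp (c : Fin C) (u : EuclideanSpace ℝ (Fin d)) (i : Fin k → Fin C)
    (hk : k ≤ K) :
    rkSup ρ f K c u k i = logOneAddSumExp fun j : Fin K =>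
      -⟪u, meanRep ρ f c - meanRep ρ f (padTuple i c j)⟫ := by
  rw [logOneAddSumExp, sum_padTuple i c (fun l => exp (-⟪u, meanRep ρ f c - meanRep ρ f l⟫)) hk,
    rkSup, sub_self, inner_zero_right, neg_zero, exp_zero, nsmul_one, add_assoc]

lemma rkSup_le_logOneAddSumExp_add (c : Fin C) {u : EuclideanSpace ℝ (Fin d)} (i : Fin k → Fin C)
    (hk : k ≤ K) (hu : ‖u‖ ≤ 1) (ν : Fin C → EuclideanSpace ℝ (Fin d)) {εc : ℝ}
    {ε : Fin k → ℝ} (hc : ‖ν c - meanRep ρ f c‖ ≤ εc)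
    (hi : ∀ m, ‖ν (i m) - meanRep ρ f (i m)‖ ≤ ε m) :
    rkSup ρ f K c u k i ≤
      logOneAddSumExp (fun j : Fin K => ⟪u, ν (padTuple i c j) - ν c⟫) + (εc + ⨆ m, ε m) := by
  have hdev : ∀ l, |⟪u, ν l - meanRep ρ f l⟫| ≤ ‖ν l - meanRep ρ f l‖ :=
    fun l => abs_real_inner_le_norm_of_norm_le_one hu _
  have hεc : ⟪u, ν c - meanRep ρ f c⟫ ≤ εc := (le_abs_self _).trans ((hdev c).trans hc)
  have hεc0 : 0 ≤ εc := (norm_nonneg _).trans hc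
  have hε : ∀ m, ε m ≤ ⨆ m, ε m := le_ciSup (Set.finite_range ε).bddAbove
  have hε0 : 0 ≤ ⨆ m, ε m := Real.iSup_nonneg fun m => (norm_nonneg _).trans (hi m)
  rw [rkSup_eq_logOneAddSumExp c u i hk]
  refine logOneAddSumExp_le_add (add_nonneg hεc0 hε0) fun j => ?_
  have hsplit : ∀ l, -⟪u, meanRep ρ f c - meanRep ρ f l⟫ =
      ⟪u, ν l - ν c⟫ + (⟪u, ν c - meanRep ρ f c⟫ - ⟪u, ν l - meanRep ρ f l⟫) := fun l => by
    simp only [inner_sub_right]; ring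
  rw [hsplit]
  by_cases hj : (j : ℕ) < k
  · simp only [padTuple, dif_pos hj]
    linarith [neg_abs_le ⟪u, ν (i ⟨j, hj⟩) - meanRep ρ f (i ⟨j, hj⟩)⟫, hdev (i ⟨j, hj⟩),
      hi ⟨j, hj⟩, hε ⟨j, hj⟩]
  · simp only [padTuple, dif_neg hj, sub_self, inner_zero_right]
    linarith

variable {PA : Measure Ω} [IsProbabilityMeasure PA] {A : Ω → X → X}
  [∀ l, IsProbabilityMeasure (ρ l)]

lemma logOneAddSumExp_sub_le_innerRisk (hA : Measurable fun p : Ω × X => A p.1 p.2)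
    (hfm : Measurable f) (hf : ∀ x, ‖f x‖ ≤ 1) (c : Fin C) (xb : X) (a : Ω) (i : Fin k → Fin C)
    {u : EuclideanSpace ℝ (Fin d)} (ν : EuclideanSpace ℝ (Fin d)) (hu : ‖u‖ ≤ 1) :
    logOneAddSumExp (fun j : Fin K => ⟪u, (∫ x, augMean PA A f x ∂ρ (padTuple i c j)) - ν⟫) -
        (2 * ‖f (A a xb) - u‖ + ∫ a', ‖f (A a' xb) - ν‖ ∂PA) ≤
      innerRisk ρ PA A f K c xb a k i := by
  have hfA : Measurable fun p : Ω × X => f (A p.1 p.2) := hfm.comp hA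
  set δ := 2 * ‖f (A a xb) - u‖ + ∫ a', ‖f (A a' xb) - ν‖ ∂PA
  set μ := Measure.pi fun j => ρ (padTuple i c j)
  let F : ((Fin K → X) × Ω) × (Fin K → Ω) → ℝ := fun q =>
    infoNCE f K (A a xb) (A q.1.2 xb) fun j => A (q.2 j) (q.1.1 j)
  have hF : StronglyMeasurable F := ((measurable_infoNCE hfm).comp
    (f := fun q : ((Fin K → X) × Ω) × (Fin K → Ω) =>
      (A a xb, A q.1.2 xb, fun j => A (q.2 j) (q.1.1 j))) (by fun_prop)).stronglyMeasurable
  have hΦ : Integrable (fun xs => ∫ a', ∫ as, F ((xs, a'), as) ∂(Measure.pi fun _ => PA) ∂PA) μ :=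
    integrable_integral_prod_right_of_norm_le hF.integral_prod_right' fun _ =>
      norm_integral_le_of_forall_norm_le fun _ => norm_infoNCE_le hf _ _ _
  have hT : ∀ j : Fin K, Integrable (fun x => ⟪u, augMean PA A f x - ν⟫) (ρ (padTuple i c j)) :=
    fun j => ((integrable_augMean hfA hf).sub (integrable_const ν)).const_inner u
  have hLT : Integrable (fun xs : Fin K → X =>
      logOneAddSumExp fun j => ⟪u, augMean PA A f (xs j) - ν⟫) μ :=
    integrable_logOneAddSumExp_pi (g := fun _ x => ⟪u, augMean PA A f x - ν⟫) hT
  calc logOneAddSumExp (fun j : Fin K => ⟪u, (∫ x, augMean PA A f x ∂ρ (padTuple i c j)) - ν⟫) - δ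
      = logOneAddSumExp (fun j : Fin K => ∫ x, ⟪u, augMean PA A f x - ν⟫ ∂ρ (padTuple i c j)) -
          δ := by
        simp only [integral_inner_sub (integrable_augMean hfA hf)]
    _ ≤ (∫ xs, logOneAddSumExp (fun j => ⟪u, augMean PA A f (xs j) - ν⟫) ∂μ) - δ :=
        sub_le_sub_right (logOneAddSumExp_integral_le_integral_pi
          (g := fun _ x => ⟪u, augMean PA A f x - ν⟫) hT) δ
    _ = ∫ xs, (logOneAddSumExp (fun j => ⟪u, augMean PA A f (xs j) - ν⟫) - δ) ∂μ := by
        rw [integral_sub hLT (integrable_const _), integral_const, probReal_univ, one_smul]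
    _ ≤ innerRisk ρ PA A f K c xb a k i := integral_mono (hLT.sub (integrable_const _)) hΦ
        fun xs => logOneAddSumExp_inner_augMean_sub_le_integral_integral_infoNCE hA hfm hf ν hu
          (A a xb) xb xs

end InnerRisk

theorem inner_risk_bound_general
    (K : ℕ)
    (ρ : Fin C → Measure X) [∀ c, IsProbabilityMeasure (ρ c)]
    (PA : Measure Ω) [IsProbabilityMeasure PA]
    (A : Ω → X → X) (hA : Measurable fun p : Ω × X => A p.1 p.2)
    (f : X → EuclideanSpace ℝ (Fin d)) (hfm : Measurable f)
    (hf : ∀ x, ‖f x‖ = 1)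
    (hid : ∃ ω : Ω, A ω = id)
    (c : Fin C) (xb : X) (a : Ω)
    (k : ℕ) (hk : k ≤ K) (i : Fin k → Fin C)
    (hsupc : Integrable
      (fun xb' => ⨆ p : Ω × Ω, ‖f (A p.1 xb') - f (A p.2 xb')‖) (ρ c))
    (hsupi : ∀ m : Fin k, Integrable
      (fun xm => ⨆ p : Ω × Ω, ‖f (A p.1 xm) - f (A p.2 xm)‖) (ρ (i m)))
    (hinf1 : ∀ xb' : X,
      Integrable (fun a' => ⨅ a'' : Ω, ‖f (A a' xb) - f (A a'' xb')‖) PA)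
    (hinf2 : Integrable
      (fun xb' => ∫ a', (⨅ a'' : Ω, ‖f (A a' xb) - f (A a'' xb')‖) ∂PA) (ρ c)) :
    innerRisk ρ PA A f K c xb a k i ≥
      rkSup ρ f K c (f xb) k i -
        (2 * ‖f (A a xb) - f xb‖ +
          2 * (∫ xb', (⨆ p : Ω × Ω, ‖f (A p.1 xb') - f (A p.2 xb')‖) ∂(ρ c)) +
          (⨆ m : Fin k,
            ∫ xm, (⨆ p : Ω × Ω, ‖f (A p.1 xm) - f (A p.2 xm)‖) ∂(ρ (i m))) +
          ∫ xb', ∫ a', (⨅ a'' : Ω, ‖f (A a' xb) - f (A a'' xb')‖) ∂PA ∂(ρ c)) := by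
  have : Nonempty Ω := hid.nonempty
  have hfA : Measurable fun p : Ω × X => f (A p.1 p.2) := hfm.comp hA
  have hf1 : ∀ x, ‖f x‖ ≤ 1 := fun x => (hf x).le
  let ν := fun l => ∫ x, augMean PA A f x ∂ρ l
  have hrisk := logOneAddSumExp_sub_le_innerRisk (K := K) (ρ := ρ) (PA := PA) hA hfm hf1 c xb a i
    (ν c) (hf1 xb)
  have hpositive := integral_norm_sub_integral_augMean_le (v := fun a' => f (A a' xb)) hfA hf1
    (hfA.comp (measurable_id.prodMk measurable_const)) (fun _ => hf1 _) hinf1 hinf2 hsupc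
  have hsup := rkSup_le_logOneAddSumExp_add c i hk (hf1 xb) ν
    (norm_integral_augMean_sub_integral_le hfm hfA hf1 hid hsupc)
    fun m => norm_integral_augMean_sub_integral_le hfm hfA hf1 hid (hsupi m)
  unfold augDiam at hpositive hsup
  linarith

/-- **Theorem 5 (Bound of the inner risk).**
For `‖f(·)‖ = 1` and identity among the augmentations, for every fixed anchor class `c`,
image `x̄`, augmentation `a`, `k ≤ K` and classes `i_1,…,i_k ≠ c`,
`r_k(i_1,…,i_k) ≥ r_k^sup(i_1,…,i_k) − [2‖f(a(x̄)) − f(x̄)‖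
  + 2·E_{x̄'~ρ_c} sup_{a',a''}‖f(a''(x̄')) − f(a'(x̄'))‖
  + max_m E_{x̄_m~ρ_{i_m}} sup_{a',a''}‖f(a''(x̄_m)) − f(a'(x̄_m))‖
  + E_{x̄'~ρ_c} E_{a'} inf_{a''}‖f(a'(x̄)) − f(a''(x̄'))‖]`. -/
theorem inner_risk_bound
    (K : ℕ) (hC : 1 ≤ C) (hK : 1 ≤ K)
    (pr : Fin C → ℝ) (hpr : ∀ c, 0 ≤ pr c) (hpr1 : ∑ c, pr c = 1)
    (ρ : Fin C → Measure X) [∀ c, IsProbabilityMeasure (ρ c)]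
    (PA : Measure Ω) [IsProbabilityMeasure PA]
    (A : Ω → X → X) (hA : Measurable fun p : Ω × X => A p.1 p.2)
    (f : X → EuclideanSpace ℝ (Fin d)) (hfm : Measurable f)
    (hf : ∀ x, ‖f x‖ = 1)
    (hid : ∃ ω : Ω, A ω = id)
    (c : Fin C) (xb : X) (a : Ω)
    (k : ℕ) (hk : k ≤ K) (i : Fin k → Fin C) (hi : ∀ m, i m ≠ c)
    (hsupc : Integrable
      (fun xb' => ⨆ p : Ω × Ω, ‖f (A p.1 xb') - f (A p.2 xb')‖) (ρ c))
    (hsupi : ∀ m : Fin k, Integrable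
      (fun xm => ⨆ p : Ω × Ω, ‖f (A p.1 xm) - f (A p.2 xm)‖) (ρ (i m)))
    (hinf1 : ∀ xb' : X,
      Integrable (fun a' => ⨅ a'' : Ω, ‖f (A a' xb) - f (A a'' xb')‖) PA)
    (hinf2 : Integrable
      (fun xb' => ∫ a', (⨅ a'' : Ω, ‖f (A a' xb) - f (A a'' xb')‖) ∂PA) (ρ c)) :
    innerRisk ρ PA A f K c xb a k i ≥
      rkSup ρ f K c (f xb) k i -
        (2 * ‖f (A a xb) - f xb‖ +
          2 * (∫ xb', (⨆ p : Ω × Ω, ‖f (A p.1 xb') - f (A p.2 xb')‖) ∂(ρ c)) +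
          (⨆ m : Fin k,
            ∫ xm, (⨆ p : Ω × Ω, ‖f (A p.1 xm) - f (A p.2 xm)‖) ∂(ρ (i m))) +
          ∫ xb', ∫ a', (⨅ a'' : Ω, ‖f (A a' xb) - f (A a'' xb')‖) ∂PA ∂(ρ c)) :=
  inner_risk_bound_general K ρ PA A hA f hfm hf hid c xb a k hk i hsupc hsupi hinf1 hinf2
end
end

section
/- Let 𝒜 be a set of maps a : 𝒳 → 𝒳 containing the identity map and equipped with a probability distribution P_A, and let f : 𝒳 → ℝ^d satisfy ‖f(x)‖ ≤ 1 for all x ∈ 𝒳. Fix x̄ ∈ 𝒳, a ∈ 𝒜, and probability measures ρ and ρ' on 𝒳. Then E_{x̄_m~ρ'} E_{a'~P_A} E_{a_m~P_A} f(a(x̄))ᵀ[ f(a'(x̄)) − f(a_m(x̄_m)) ] ≤ E_{x̄'~ρ} E_{x̄_m~ρ'} f(x̄)ᵀ[ f(x̄') − f(x̄_m) ] + E_{x̄'~ρ} E_{a'~P_A} inf_{a''∈𝒜} ‖f(a'(x̄)) − f(a''(x̄'))‖ + 2·‖f(a(x̄)) − f(x̄)‖ + 2·E_{x̄'~ρ}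 sup_{a',a''∈𝒜} ‖f(a''(x̄')) − f(a'(x̄'))‖ + E_{x̄_m~ρ'} sup_{a',a''∈𝒜} ‖f(a''(x̄_m)) − f(a'(x̄_m))‖. -/
open MeasureTheory Real
open scoped BigOperators RealInnerProductSpace

private lemma int_bdd {α : Type*} [MeasurableSpace α] {μ : Measure α} [IsFiniteMeasure μ]
    {g : α → ℝ} (hg : AEStronglyMeasurable g μ) {C : ℝ} (h : ∀ x, |g x| ≤ C) :
    Integrable g μ :=
  ⟨hg, HasFiniteIntegral.of_bounded (C := C) (ae_of_all _ (by simpa [Real.norm_eq_abs] using h))⟩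

private lemma abs_int_le {α : Type*} [MeasurableSpace α] (μ : Measure α) [IsProbabilityMeasure μ]
    {g : α → ℝ} {C : ℝ} (h : ∀ x, |g x| ≤ C) : |∫ x, g x ∂μ| ≤ C := by
  have := norm_integral_le_of_norm_le_const (μ := μ) (f := g) (C := C)
    (ae_of_all _ (by simpa [Real.norm_eq_abs] using h))
  simpa [Real.norm_eq_abs, measure_univ] using this

/-- **Different-class inner-product bound.**
For `‖f(·)‖ ≤ 1`, identity among the augmentations, a fixed image `x̄` and augmentation
`a`, and probability measures `ρ` (the anchor's class) and `ρ'` (a different class),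
`E_{x̄_m~ρ'} E_{a'} E_{a_m} f(a(x̄))ᵀ[f(a'(x̄)) − f(a_m(x̄_m))]
  ≤ E_{x̄'~ρ} E_{x̄_m~ρ'} f(x̄)ᵀ[f(x̄') − f(x̄_m)]
    + E_{x̄'~ρ} E_{a'} inf_{a''} ‖f(a'(x̄)) − f(a''(x̄'))‖
    + 2‖f(a(x̄)) − f(x̄)‖
    + 2·E_{x̄'~ρ} sup_{a',a''} ‖f(a''(x̄')) − f(a'(x̄'))‖
    + E_{x̄_m~ρ'} sup_{a',a''} ‖f(a''(x̄_m)) − f(a'(x̄_m))‖`. -/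
theorem different_class_inner_product_bound
    {X : Type*} [MeasurableSpace X] {Ω : Type*} [MeasurableSpace Ω] {d : ℕ}
    (PA : Measure Ω) [IsProbabilityMeasure PA]
    (A : Ω → X → X) (hA : Measurable fun p : Ω × X => A p.1 p.2)
    (hid : ∃ ω : Ω, A ω = id)
    (f : X → EuclideanSpace ℝ (Fin d)) (hfm : Measurable f)
    (hf : ∀ x, ‖f x‖ ≤ 1)
    (xb : X) (a : Ω)
    (ρ ρ' : Measure X) [IsProbabilityMeasure ρ] [IsProbabilityMeasure ρ']
    (hinf1 : ∀ xb' : X,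
      Integrable (fun a' => ⨅ a'' : Ω, ‖f (A a' xb) - f (A a'' xb')‖) PA)
    (hinf2 : Integrable
      (fun xb' => ∫ a', (⨅ a'' : Ω, ‖f (A a' xb) - f (A a'' xb')‖) ∂PA) ρ)
    (hsup : Integrable
      (fun xb' => ⨆ p : Ω × Ω, ‖f (A p.1 xb') - f (A p.2 xb')‖) ρ)
    (hsup' : Integrable
      (fun xm => ⨆ p : Ω × Ω, ‖f (A p.1 xm) - f (A p.2 xm)‖) ρ') :
    (∫ xm, ∫ a', ∫ am, ⟪f (A a xb), f (A a' xb) - f (A am xm)⟫ ∂PA ∂PA ∂ρ') ≤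
      (∫ xb', ∫ xm, ⟪f xb, f xb' - f xm⟫ ∂ρ' ∂ρ) +
        (∫ xb', ∫ a', (⨅ a'' : Ω, ‖f (A a' xb) - f (A a'' xb')‖) ∂PA ∂ρ) +
        2 * ‖f (A a xb) - f xb‖ +
        2 * (∫ xb', (⨆ p : Ω × Ω, ‖f (A p.1 xb') - f (A p.2 xb')‖) ∂ρ) +
        ∫ xm, (⨆ p : Ω × Ω, ‖f (A p.1 xm) - f (A p.2 xm)‖) ∂ρ' := by
  obtain ⟨ω₀, hω₀⟩ := hid
  haveI : Nonempty Ω := ⟨ω₀⟩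
  have hidx : ∀ x : X, A ω₀ x = x := fun x => by rw [hω₀]; rfl
  -- basic norm bounds
  have hfd : ∀ y z : X, ‖f y - f z‖ ≤ 2 := fun y z =>
    (norm_sub_le _ _).trans (by linarith [hf y, hf z])
  have hip : ∀ (y : X) (w : EuclideanSpace ℝ (Fin d)), ⟪f y, w⟫ ≤ ‖w‖ := fun y w =>
    (real_inner_le_norm _ _).trans (by nlinarith [hf y, norm_nonneg w])
  have hSbdd : ∀ x : X, BddAbove (Set.range fun p : Ω × Ω => ‖f (A p.1 x) - f (A p.2 x)‖) :=
    fun x => ⟨2, by rintro r ⟨p, rfl⟩; exact hfd _ _⟩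
  have hSle : ∀ (x : X) (ω ω' : Ω),
      ‖f (A ω x) - f (A ω' x)‖ ≤ ⨆ p : Ω × Ω, ‖f (A p.1 x) - f (A p.2 x)‖ :=
    fun x ω ω' => le_ciSup (hSbdd x) (ω, ω')
  have hS0 : ∀ x : X, 0 ≤ ⨆ p : Ω × Ω, ‖f (A p.1 x) - f (A p.2 x)‖ := fun x =>
    le_trans (by simp) (hSle x ω₀ ω₀)
  -- pointwise bounds on the inner products
  have hφbd : ∀ (xm : X) (a' am : Ω),
      |⟪f (A a xb), f (A a' xb) - f (A am xm)⟫| ≤ 2 := fun xm a' am =>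
    (abs_real_inner_le_norm _ _).trans
      (by nlinarith [hf (A a xb), hfd (A a' xb) (A am xm),
        norm_nonneg (f (A a xb)), norm_nonneg (f (A a' xb) - f (A am xm))])
  have hGbd : ∀ xb' xm : X, |⟪f xb, f xb' - f xm⟫| ≤ 2 := fun xb' xm =>
    (abs_real_inner_le_norm _ _).trans
      (by nlinarith [hf xb, hfd xb' xm, norm_nonneg (f xb), norm_nonneg (f xb' - f xm)])
  -- the key pointwise inequality
  have hkey : ∀ (xm xb' : X) (a' am : Ω),
      ⟪f (A a xb), f (A a' xb) - f (A am xm)⟫ ≤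
        ⟪f xb, f xb' - f xm⟫ + (⨅ a'' : Ω, ‖f (A a' xb) - f (A a'' xb')‖) +
          2 * ‖f (A a xb) - f xb‖ +
          (⨆ p : Ω × Ω, ‖f (A p.1 xb') - f (A p.2 xb')‖) +
          (⨆ p : Ω × Ω, ‖f (A p.1 xm) - f (A p.2 xm)‖) := by
    intro xm xb' a' am
    have key2 : ∀ a'' : Ω,
        ⟪f xb, f (A a' xb) - f (A am xm)⟫ ≤
          ‖f (A a' xb) - f (A a'' xb')‖ +
          (⨆ p : Ω × Ω, ‖f (A p.1 xb') - f (A p.2 xb')‖) +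
          ⟪f xb, f xb' - f xm⟫ +
          (⨆ p : Ω × Ω, ‖f (A p.1 xm) - f (A p.2 xm)‖) := by
      intro a''
      have hd : f (A a' xb) - f (A am xm) =
          (f (A a' xb) - f (A a'' xb')) + ((f (A a'' xb') - f xb') +
            ((f xb' - f xm) + (f xm - f (A am xm)))) := by abel
      rw [hd, inner_add_right, inner_add_right, inner_add_right]
      have h1 := hip xb (f (A a' xb) - f (A a'' xb'))
      have h2 : ⟪f xb, f (A a'' xb') - f xb'⟫ ≤
          ⨆ p : Ω × Ω, ‖f (A p.1 xb') - f (A p.2 xb')‖ := by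
        refine (hip xb _).trans ?_
        have := hSle xb' a'' ω₀
        rwa [hidx xb'] at this
      have h4 : ⟪f xb, f xm - f (A am xm)⟫ ≤
          ⨆ p : Ω × Ω, ‖f (A p.1 xm) - f (A p.2 xm)‖ := by
        refine (hip xb _).trans ?_
        have := hSle xm ω₀ am
        rwa [hidx xm] at this
      linarith
    have key1 : ⟪f xb, f (A a' xb) - f (A am xm)⟫ ≤
        (⨅ a'' : Ω, ‖f (A a' xb) - f (A a'' xb')‖) +
        (⨆ p : Ω × Ω, ‖f (A p.1 xb') - f (A p.2 xb')‖) +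
        ⟪f xb, f xb' - f xm⟫ +
        (⨆ p : Ω × Ω, ‖f (A p.1 xm) - f (A p.2 xm)‖) := by
      have h := le_ciInf (f := fun a'' : Ω => ‖f (A a' xb) - f (A a'' xb')‖)
        (fun a'' => by linarith [key2 a''] :
          ∀ a'' : Ω, ⟪f xb, f (A a' xb) - f (A am xm)⟫ -
            ((⨆ p : Ω × Ω, ‖f (A p.1 xb') - f (A p.2 xb')‖) +
             ⟪f xb, f xb' - f xm⟫ +
             (⨆ p : Ω × Ω, ‖f (A p.1 xm) - f (A p.2 xm)‖)) ≤
            ‖f (A a' xb) - f (A a'' xb')‖)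
      linarith
    have hsplit : ⟪f (A a xb), f (A a' xb) - f (A am xm)⟫ =
        ⟪f (A a xb) - f xb, f (A a' xb) - f (A am xm)⟫ +
        ⟪f xb, f (A a' xb) - f (A am xm)⟫ := by
      rw [inner_sub_left]; ring
    have hb1 : ⟪f (A a xb) - f xb, f (A a' xb) - f (A am xm)⟫ ≤
        2 * ‖f (A a xb) - f xb‖ := by
      have := real_inner_le_norm (f (A a xb) - f xb) (f (A a' xb) - f (A am xm))
      nlinarith [hfd (A a' xb) (A am xm), norm_nonneg (f (A a xb) - f xb)]
    linarith
  -- measurability facts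
  have mfA : Measurable fun p : Ω × X => f (A p.1 p.2) := hfm.comp hA
  have mφ : Measurable fun q : (X × Ω) × Ω =>
      ⟪f (A a xb), f (A q.1.2 xb) - f (A q.2 q.1.1)⟫ :=
    Measurable.inner measurable_const
      ((mfA.comp (measurable_fst.snd.prodMk measurable_const)).sub
        (mfA.comp (measurable_snd.prodMk measurable_fst.fst)))
  have smΦ : StronglyMeasurable fun p : X × Ω =>
      ∫ am, ⟪f (A a xb), f (A p.2 xb) - f (A am p.1)⟫ ∂PA :=
    mφ.stronglyMeasurable.integral_prod_right'
  have smL : StronglyMeasurable fun xm : X =>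
      ∫ a', ∫ am, ⟪f (A a xb), f (A a' xb) - f (A am xm)⟫ ∂PA ∂PA :=
    smΦ.integral_prod_right'
  have mH : Measurable fun q : X × X => ⟪f xb, f q.2 - f q.1⟫ :=
    Measurable.inner measurable_const
      ((hfm.comp measurable_snd).sub (hfm.comp measurable_fst))
  have smG : StronglyMeasurable fun xm : X => ∫ xb', ⟪f xb, f xb' - f xm⟫ ∂ρ :=
    mH.stronglyMeasurable.integral_prod_right'
  -- integrability of inner integrals
  have intφ : ∀ (xm : X) (a' : Ω),
      Integrable (fun am => ⟪f (A a xb), f (A a' xb) - f (A am xm)⟫) PA := by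
    intro xm a'
    refine int_bdd ?_ (fun am => hφbd xm a' am)
    exact (Measurable.inner measurable_const
      (measurable_const.sub (mfA.comp (measurable_id.prodMk measurable_const)))).aestronglyMeasurable
  -- Step A1: bound the innermost integral pointwise
  have stepA1 : ∀ (xm xb' : X) (a' : Ω),
      (∫ am, ⟪f (A a xb), f (A a' xb) - f (A am xm)⟫ ∂PA) ≤
        ⟪f xb, f xb' - f xm⟫ + (⨅ a'' : Ω, ‖f (A a' xb) - f (A a'' xb')‖) +
          2 * ‖f (A a xb) - f xb‖ +
          (⨆ p : Ω × Ω, ‖f (A p.1 xb') - f (A p.2 xb')‖) +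
          (⨆ p : Ω × Ω, ‖f (A p.1 xm) - f (A p.2 xm)‖) := by
    intro xm xb' a'
    calc (∫ am, ⟪f (A a xb), f (A a' xb) - f (A am xm)⟫ ∂PA) ≤
        ∫ _am, (⟪f xb, f xb' - f xm⟫ + (⨅ a'' : Ω, ‖f (A a' xb) - f (A a'' xb')‖) +
          2 * ‖f (A a xb) - f xb‖ +
          (⨆ p : Ω × Ω, ‖f (A p.1 xb') - f (A p.2 xb')‖) +
          (⨆ p : Ω × Ω, ‖f (A p.1 xm) - f (A p.2 xm)‖)) ∂PA :=
        integral_mono (intφ xm a') (integrable_const _) (fun am => hkey xm xb' a' am)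
      _ = _ := by simp
  -- Step A2: integrate over a'
  have stepA2 : ∀ (xm xb' : X),
      (∫ a', ∫ am, ⟪f (A a xb), f (A a' xb) - f (A am xm)⟫ ∂PA ∂PA) ≤
        ⟪f xb, f xb' - f xm⟫ +
          (∫ a', (⨅ a'' : Ω, ‖f (A a' xb) - f (A a'' xb')‖) ∂PA) +
          2 * ‖f (A a xb) - f xb‖ +
          (⨆ p : Ω × Ω, ‖f (A p.1 xb') - f (A p.2 xb')‖) +
          (⨆ p : Ω × Ω, ‖f (A p.1 xm) - f (A p.2 xm)‖) := by
    intro xm xb'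
    have hL : Integrable (fun a' => ∫ am, ⟪f (A a xb), f (A a' xb) - f (A am xm)⟫ ∂PA) PA := by
      refine int_bdd ?_ (fun a' => abs_int_le PA (fun am => hφbd xm a' am))
      exact (smΦ.measurable.comp (measurable_const.prodMk measurable_id)).aestronglyMeasurable
    have hR : Integrable (fun a' : Ω =>
        ⟪f xb, f xb' - f xm⟫ + (⨅ a'' : Ω, ‖f (A a' xb) - f (A a'' xb')‖) +
          2 * ‖f (A a xb) - f xb‖ +
          (⨆ p : Ω × Ω, ‖f (A p.1 xb') - f (A p.2 xb')‖) +
          (⨆ p : Ω × Ω, ‖f (A p.1 xm) - f (A p.2 xm)‖)) PA := by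
      exact ((((integrable_const _).add (hinf1 xb')).add (integrable_const _)).add
        (integrable_const _)).add (integrable_const _)
    calc (∫ a', ∫ am, ⟪f (A a xb), f (A a' xb) - f (A am xm)⟫ ∂PA ∂PA) ≤
        ∫ a', (⟪f xb, f xb' - f xm⟫ + (⨅ a'' : Ω, ‖f (A a' xb) - f (A a'' xb')‖) +
          2 * ‖f (A a xb) - f xb‖ +
          (⨆ p : Ω × Ω, ‖f (A p.1 xb') - f (A p.2 xb')‖) +
          (⨆ p : Ω × Ω, ‖f (A p.1 xm) - f (A p.2 xm)‖)) ∂PA :=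
        integral_mono hL hR (fun a' => stepA1 xm xb' a')
      _ = _ := by
        have hco : (fun a' : Ω =>
            ⟪f xb, f xb' - f xm⟫ + (⨅ a'' : Ω, ‖f (A a' xb) - f (A a'' xb')‖) +
              2 * ‖f (A a xb) - f xb‖ +
              (⨆ p : Ω × Ω, ‖f (A p.1 xb') - f (A p.2 xb')‖) +
              (⨆ p : Ω × Ω, ‖f (A p.1 xm) - f (A p.2 xm)‖)) =
            fun a' : Ω => (⨅ a'' : Ω, ‖f (A a' xb) - f (A a'' xb')‖) +
              (⟪f xb, f xb' - f xm⟫ + 2 * ‖f (A a xb) - f xb‖ +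
               (⨆ p : Ω × Ω, ‖f (A p.1 xb') - f (A p.2 xb')‖) +
               (⨆ p : Ω × Ω, ‖f (A p.1 xm) - f (A p.2 xm)‖)) := by
          funext a'; ring
        rw [hco, integral_add (hinf1 xb') (integrable_const _), integral_const]
        simp; ring
  -- Step A: average in xb' over ρ
  have iG : ∀ xm : X, Integrable (fun xb' => ⟪f xb, f xb' - f xm⟫) ρ := by
    intro xm
    refine int_bdd ?_ (fun xb' => hGbd xb' xm)
    exact (mH.comp (measurable_const.prodMk measurable_id)).aestronglyMeasurable
  have stepA : ∀ xm : X,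
      (∫ a', ∫ am, ⟪f (A a xb), f (A a' xb) - f (A am xm)⟫ ∂PA ∂PA) ≤
        (∫ xb', ⟪f xb, f xb' - f xm⟫ ∂ρ) +
          (∫ xb', ∫ a', (⨅ a'' : Ω, ‖f (A a' xb) - f (A a'' xb')‖) ∂PA ∂ρ) +
          2 * ‖f (A a xb) - f xb‖ +
          (∫ xb', (⨆ p : Ω × Ω, ‖f (A p.1 xb') - f (A p.2 xb')‖) ∂ρ) +
          (⨆ p : Ω × Ω, ‖f (A p.1 xm) - f (A p.2 xm)‖) := by
    intro xm
    have hR : Integrable (fun xb' : X =>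
        ⟪f xb, f xb' - f xm⟫ +
          (∫ a', (⨅ a'' : Ω, ‖f (A a' xb) - f (A a'' xb')‖) ∂PA) +
          2 * ‖f (A a xb) - f xb‖ +
          (⨆ p : Ω × Ω, ‖f (A p.1 xb') - f (A p.2 xb')‖) +
          (⨆ p : Ω × Ω, ‖f (A p.1 xm) - f (A p.2 xm)‖)) ρ :=
      ((((iG xm).add hinf2).add (integrable_const _)).add hsup).add (integrable_const _)
    calc (∫ a', ∫ am, ⟪f (A a xb), f (A a' xb) - f (A am xm)⟫ ∂PA ∂PA) =
        ∫ _xb', (∫ a', ∫ am, ⟪f (A a xb), f (A a' xb) - f (A am xm)⟫ ∂PA ∂PA) ∂ρ := by simp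
      _ ≤ ∫ xb', (⟪f xb, f xb' - f xm⟫ +
          (∫ a', (⨅ a'' : Ω, ‖f (A a' xb) - f (A a'' xb')‖) ∂PA) +
          2 * ‖f (A a xb) - f xb‖ +
          (⨆ p : Ω × Ω, ‖f (A p.1 xb') - f (A p.2 xb')‖) +
          (⨆ p : Ω × Ω, ‖f (A p.1 xm) - f (A p.2 xm)‖)) ∂ρ :=
        integral_mono (integrable_const _) hR (fun xb' => stepA2 xm xb')
      _ = _ := by
        have hA2 : Integrable (fun xb' : X => ⟪f xb, f xb' - f xm⟫ +
            (∫ a', (⨅ a'' : Ω, ‖f (A a' xb) - f (A a'' xb')‖) ∂PA)) ρ := (iG xm).add hinf2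
        have hA3 : Integrable (fun xb' : X => ⟪f xb, f xb' - f xm⟫ +
            (∫ a', (⨅ a'' : Ω, ‖f (A a' xb) - f (A a'' xb')‖) ∂PA) +
            2 * ‖f (A a xb) - f xb‖) ρ := hA2.add (integrable_const _)
        have hA4 : Integrable (fun xb' : X => ⟪f xb, f xb' - f xm⟫ +
            (∫ a', (⨅ a'' : Ω, ‖f (A a' xb) - f (A a'' xb')‖) ∂PA) +
            2 * ‖f (A a xb) - f xb‖ +
            (⨆ p : Ω × Ω, ‖f (A p.1 xb') - f (A p.2 xb')‖)) ρ := hA3.add hsup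
        have e1 : (∫ xb', (⟪f xb, f xb' - f xm⟫ +
            (∫ a', (⨅ a'' : Ω, ‖f (A a' xb) - f (A a'' xb')‖) ∂PA) +
            2 * ‖f (A a xb) - f xb‖ +
            (⨆ p : Ω × Ω, ‖f (A p.1 xb') - f (A p.2 xb')‖) +
            (⨆ p : Ω × Ω, ‖f (A p.1 xm) - f (A p.2 xm)‖)) ∂ρ) =
            (∫ xb', (⟪f xb, f xb' - f xm⟫ +
              (∫ a', (⨅ a'' : Ω, ‖f (A a' xb) - f (A a'' xb')‖) ∂PA) +
              2 * ‖f (A a xb) - f xb‖ +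
              (⨆ p : Ω × Ω, ‖f (A p.1 xb') - f (A p.2 xb')‖)) ∂ρ) +
            ∫ _xb', (⨆ p : Ω × Ω, ‖f (A p.1 xm) - f (A p.2 xm)‖) ∂ρ :=
          integral_add hA4 (integrable_const _)
        have e2 : (∫ xb', (⟪f xb, f xb' - f xm⟫ +
            (∫ a', (⨅ a'' : Ω, ‖f (A a' xb) - f (A a'' xb')‖) ∂PA) +
            2 * ‖f (A a xb) - f xb‖ +
            (⨆ p : Ω × Ω, ‖f (A p.1 xb') - f (A p.2 xb')‖)) ∂ρ) =
            (∫ xb', (⟪f xb, f xb' - f xm⟫ +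
              (∫ a', (⨅ a'' : Ω, ‖f (A a' xb) - f (A a'' xb')‖) ∂PA) +
              2 * ‖f (A a xb) - f xb‖) ∂ρ) +
            ∫ xb', (⨆ p : Ω × Ω, ‖f (A p.1 xb') - f (A p.2 xb')‖) ∂ρ :=
          integral_add hA3 hsup
        have e3 : (∫ xb', (⟪f xb, f xb' - f xm⟫ +
            (∫ a', (⨅ a'' : Ω, ‖f (A a' xb) - f (A a'' xb')‖) ∂PA) +
            2 * ‖f (A a xb) - f xb‖) ∂ρ) =
            (∫ xb', (⟪f xb, f xb' - f xm⟫ +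
              (∫ a', (⨅ a'' : Ω, ‖f (A a' xb) - f (A a'' xb')‖) ∂PA)) ∂ρ) +
            ∫ _xb', (2 * ‖f (A a xb) - f xb‖) ∂ρ :=
          integral_add hA2 (integrable_const _)
        have e4 : (∫ xb', (⟪f xb, f xb' - f xm⟫ +
            (∫ a', (⨅ a'' : Ω, ‖f (A a' xb) - f (A a'' xb')‖) ∂PA)) ∂ρ) =
            (∫ xb', ⟪f xb, f xb' - f xm⟫ ∂ρ) +
            ∫ xb', (∫ a', (⨅ a'' : Ω, ‖f (A a' xb) - f (A a'' xb')‖) ∂PA) ∂ρ :=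
          integral_add (iG xm) hinf2
        rw [e1, e2, e3, e4]
        simp
  -- Step B: integrate over xm ~ ρ'
  have hLint : Integrable (fun xm => ∫ a', ∫ am,
      ⟪f (A a xb), f (A a' xb) - f (A am xm)⟫ ∂PA ∂PA) ρ' := by
    refine int_bdd smL.aestronglyMeasurable (C := 2) (fun xm => ?_)
    exact abs_int_le PA (fun a' => abs_int_le PA (fun am => hφbd xm a' am))
  have iG' : Integrable (fun xm => ∫ xb', ⟪f xb, f xb' - f xm⟫ ∂ρ) ρ' := by
    refine int_bdd smG.aestronglyMeasurable (C := 2) (fun xm => ?_)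
    exact abs_int_le ρ (fun xb' => hGbd xb' xm)
  have stepB : (∫ xm, ∫ a', ∫ am, ⟪f (A a xb), f (A a' xb) - f (A am xm)⟫ ∂PA ∂PA ∂ρ') ≤
      (∫ xm, (∫ xb', ⟪f xb, f xb' - f xm⟫ ∂ρ) ∂ρ') +
        (∫ xb', ∫ a', (⨅ a'' : Ω, ‖f (A a' xb) - f (A a'' xb')‖) ∂PA ∂ρ) +
        2 * ‖f (A a xb) - f xb‖ +
        (∫ xb', (⨆ p : Ω × Ω, ‖f (A p.1 xb') - f (A p.2 xb')‖) ∂ρ) +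
        (∫ xm, (⨆ p : Ω × Ω, ‖f (A p.1 xm) - f (A p.2 xm)‖) ∂ρ') := by
    have hR : Integrable (fun xm : X =>
        (∫ xb', ⟪f xb, f xb' - f xm⟫ ∂ρ) +
          (∫ xb', ∫ a', (⨅ a'' : Ω, ‖f (A a' xb) - f (A a'' xb')‖) ∂PA ∂ρ) +
          2 * ‖f (A a xb) - f xb‖ +
          (∫ xb', (⨆ p : Ω × Ω, ‖f (A p.1 xb') - f (A p.2 xb')‖) ∂ρ) +
          (⨆ p : Ω × Ω, ‖f (A p.1 xm) - f (A p.2 xm)‖)) ρ' :=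
      (((iG'.add (integrable_const _)).add (integrable_const _)).add
        (integrable_const _)).add hsup'
    calc (∫ xm, ∫ a', ∫ am, ⟪f (A a xb), f (A a' xb) - f (A am xm)⟫ ∂PA ∂PA ∂ρ') ≤
        ∫ xm, ((∫ xb', ⟪f xb, f xb' - f xm⟫ ∂ρ) +
          (∫ xb', ∫ a', (⨅ a'' : Ω, ‖f (A a' xb) - f (A a'' xb')‖) ∂PA ∂ρ) +
          2 * ‖f (A a xb) - f xb‖ +
          (∫ xb', (⨆ p : Ω × Ω, ‖f (A p.1 xb') - f (A p.2 xb')‖) ∂ρ) +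
          (⨆ p : Ω × Ω, ‖f (A p.1 xm) - f (A p.2 xm)‖)) ∂ρ' :=
        integral_mono hLint hR (fun xm => stepA xm)
      _ = _ := by
        have hB2 : Integrable (fun xm : X => (∫ xb', ⟪f xb, f xb' - f xm⟫ ∂ρ) +
            (∫ xb', ∫ a', (⨅ a'' : Ω, ‖f (A a' xb) - f (A a'' xb')‖) ∂PA ∂ρ)) ρ' :=
          iG'.add (integrable_const _)
        have hB3 : Integrable (fun xm : X => (∫ xb', ⟪f xb, f xb' - f xm⟫ ∂ρ) +
            (∫ xb', ∫ a', (⨅ a'' : Ω, ‖f (A a' xb) - f (A a'' xb')‖) ∂PA ∂ρ) +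
            2 * ‖f (A a xb) - f xb‖) ρ' := hB2.add (integrable_const _)
        have hB4 : Integrable (fun xm : X => (∫ xb', ⟪f xb, f xb' - f xm⟫ ∂ρ) +
            (∫ xb', ∫ a', (⨅ a'' : Ω, ‖f (A a' xb) - f (A a'' xb')‖) ∂PA ∂ρ) +
            2 * ‖f (A a xb) - f xb‖ +
            (∫ xb', (⨆ p : Ω × Ω, ‖f (A p.1 xb') - f (A p.2 xb')‖) ∂ρ)) ρ' :=
          hB3.add (integrable_const _)
        have e1 : (∫ xm, ((∫ xb', ⟪f xb, f xb' - f xm⟫ ∂ρ) +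
            (∫ xb', ∫ a', (⨅ a'' : Ω, ‖f (A a' xb) - f (A a'' xb')‖) ∂PA ∂ρ) +
            2 * ‖f (A a xb) - f xb‖ +
            (∫ xb', (⨆ p : Ω × Ω, ‖f (A p.1 xb') - f (A p.2 xb')‖) ∂ρ) +
            (⨆ p : Ω × Ω, ‖f (A p.1 xm) - f (A p.2 xm)‖)) ∂ρ') =
            (∫ xm, ((∫ xb', ⟪f xb, f xb' - f xm⟫ ∂ρ) +
              (∫ xb', ∫ a', (⨅ a'' : Ω, ‖f (A a' xb) - f (A a'' xb')‖) ∂PA ∂ρ) +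
              2 * ‖f (A a xb) - f xb‖ +
              (∫ xb', (⨆ p : Ω × Ω, ‖f (A p.1 xb') - f (A p.2 xb')‖) ∂ρ)) ∂ρ') +
            ∫ xm, (⨆ p : Ω × Ω, ‖f (A p.1 xm) - f (A p.2 xm)‖) ∂ρ' :=
          integral_add hB4 hsup'
        have e2 : (∫ xm, ((∫ xb', ⟪f xb, f xb' - f xm⟫ ∂ρ) +
            (∫ xb', ∫ a', (⨅ a'' : Ω, ‖f (A a' xb) - f (A a'' xb')‖) ∂PA ∂ρ) +
            2 * ‖f (A a xb) - f xb‖ +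
            (∫ xb', (⨆ p : Ω × Ω, ‖f (A p.1 xb') - f (A p.2 xb')‖) ∂ρ)) ∂ρ') =
            (∫ xm, ((∫ xb', ⟪f xb, f xb' - f xm⟫ ∂ρ) +
              (∫ xb', ∫ a', (⨅ a'' : Ω, ‖f (A a' xb) - f (A a'' xb')‖) ∂PA ∂ρ) +
              2 * ‖f (A a xb) - f xb‖) ∂ρ') +
            ∫ _xm, (∫ xb', (⨆ p : Ω × Ω, ‖f (A p.1 xb') - f (A p.2 xb')‖) ∂ρ) ∂ρ' :=
          integral_add hB3 (integrable_const _)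
        have e3 : (∫ xm, ((∫ xb', ⟪f xb, f xb' - f xm⟫ ∂ρ) +
            (∫ xb', ∫ a', (⨅ a'' : Ω, ‖f (A a' xb) - f (A a'' xb')‖) ∂PA ∂ρ) +
            2 * ‖f (A a xb) - f xb‖) ∂ρ') =
            (∫ xm, ((∫ xb', ⟪f xb, f xb' - f xm⟫ ∂ρ) +
              (∫ xb', ∫ a', (⨅ a'' : Ω, ‖f (A a' xb) - f (A a'' xb')‖) ∂PA ∂ρ)) ∂ρ') +
            ∫ _xm, (2 * ‖f (A a xb) - f xb‖) ∂ρ' :=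
          integral_add hB2 (integrable_const _)
        have e4 : (∫ xm, ((∫ xb', ⟪f xb, f xb' - f xm⟫ ∂ρ) +
            (∫ xb', ∫ a', (⨅ a'' : Ω, ‖f (A a' xb) - f (A a'' xb')‖) ∂PA ∂ρ)) ∂ρ') =
            (∫ xm, (∫ xb', ⟪f xb, f xb' - f xm⟫ ∂ρ) ∂ρ') +
            ∫ _xm, (∫ xb', ∫ a', (⨅ a'' : Ω, ‖f (A a' xb) - f (A a'' xb')‖) ∂PA ∂ρ) ∂ρ' :=
          integral_add iG' (integrable_const _)
        rw [e1, e2, e3, e4]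
        simp
  -- Fubini swap for the G-term
  have hswap : (∫ xm, (∫ xb', ⟪f xb, f xb' - f xm⟫ ∂ρ) ∂ρ') =
      ∫ xb', (∫ xm, ⟪f xb, f xb' - f xm⟫ ∂ρ') ∂ρ := by
    apply integral_integral_swap
    exact int_bdd (μ := ρ'.prod ρ) mH.aestronglyMeasurable (C := 2)
      (fun q => hGbd q.2 q.1)
  -- nonnegativity of the sup integral
  have h2S : 0 ≤ ∫ xb', (⨆ p : Ω × Ω, ‖f (A p.1 xb') - f (A p.2 xb')‖) ∂ρ :=
    integral_nonneg (fun x => hS0 x)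
  linarith [stepB, hswap]
end

section
/- Let d ≥ 1, let S be a finite set (of semantic labels) with means μ_s^(i) ∈ ℝ and nonnegative reals σ_s^(i) for s ∈ S and channels i ∈ {1,2,3}, let s : [d]×[d] → S be a fixed pixel labeling, and fix s_max ∈ S. Let X and X' be random tensors in ℝ^{d×d×3} with all entries mutually independent, where the entry X_{j,ℓ}^(i) has mean μ_{s(j,ℓ)}^(i) and variance at most (σ_{s(j,ℓ)}^(i))², and the entry X'_{j,ℓ}^(i) has mean μ_{s_max}^(i) and variance at most (σ_{s_max}^(i))². Then E ‖X − X'‖_F ≤ ( Σ_{j,ℓ∈[d]} Σ_{i∈[3]} (σ_{s(j,ℓ)}^(i))² )^{1/2} + ( Σ_{j,ℓ∈[d]} Σ_{i∈[3]} (σ_{s_max}^(i))² )^{1/2} + ( Σ_{(j,ℓ): s(j,ℓ) ≠ s_max} Σ_{i∈[3]} (μ_{s(j,ℓ)}^(i) − μ_{s_max}^(i))² )^{1/2}. -/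
open MeasureTheory ProbabilityTheory Real

/- Proof idea: write `X - X' = (X - μ_s) + (μ_s - μ_{s_max}) + (μ_{s_max} - X')` and apply the
triangle inequality for the Euclidean norm pointwise. The bias term is deterministic, and for the
two centred terms Jensen's inequality for the concave square root gives
`E ‖X - μ_s‖ ≤ (E ‖X - μ_s‖²)^{1/2} = (Σ E (X - μ_s)²)^{1/2} ≤ (Σ σ²)^{1/2}`.
On pixels with `s(j,ℓ) = s_max` the bias vanishes, which accounts for the restricted sum. -/

section Euclidean

variable {ι : Type*} [Fintype ι]

lemma sqrt_sum_sq_sub_eq_dist (a b : ι → ℝ) :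
    √(∑ i, (a i - b i) ^ 2) = dist (WithLp.toLp 2 a) (WithLp.toLp 2 b) := by
  simp [EuclideanSpace.dist_eq, Real.dist_eq, sq_abs]

lemma sqrt_sum_sq_sub_le_add_add (a b m m' : ι → ℝ) :
    √(∑ i, (a i - b i) ^ 2) ≤
      √(∑ i, (a i - m i) ^ 2) + √(∑ i, (b i - m' i) ^ 2) + √(∑ i, (m i - m' i) ^ 2) := by
  simp only [sqrt_sum_sq_sub_eq_dist]
  linarith [dist_triangle4 (WithLp.toLp 2 a) (WithLp.toLp 2 m) (WithLp.toLp 2 m')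
    (WithLp.toLp 2 b), dist_comm (WithLp.toLp 2 b) (WithLp.toLp 2 m')]

end Euclidean

section Moments

variable {α : Type*} [MeasurableSpace α] {μ : Measure α}

lemma integrable_sqrt_of_nonneg [IsFiniteMeasure μ] {g : α → ℝ} (hg0 : 0 ≤ᵐ[μ] g)
    (hg : Integrable g μ) : Integrable (fun ω ↦ √(g ω)) μ := by
  refine ((memLp_two_iff_integrable_sq (continuous_sqrt.comp_aestronglyMeasurable hg.1)).2 ?_).integrable one_le_two
  refine hg.congr ?_
  filter_upwards [hg0] with ω hω using (sq_sqrt hω).symm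

lemma integral_sqrt_le_sqrt_integral [IsProbabilityMeasure μ] {g : α → ℝ} (hg0 : 0 ≤ᵐ[μ] g)
    (hg : Integrable g μ) : ∫ ω, √(g ω) ∂μ ≤ √(∫ ω, g ω ∂μ) :=
  strictConcaveOn_sqrt.concaveOn.le_map_integral continuous_sqrt.continuousOn isClosed_Ici hg0 hg
    (integrable_sqrt_of_nonneg hg0 hg)

variable {ι : Type*} [Fintype ι]

lemma integral_sqrt_sum_sq_sub_le [IsProbabilityMeasure μ] {X : α → ι → ℝ}
    (hX : ∀ i, MemLp (fun ω ↦ X ω i) 2 μ) (m : ι → ℝ) :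
    ∫ ω, √(∑ i, (X ω i - m i) ^ 2) ∂μ ≤ √(∑ i, ∫ ω, (X ω i - m i) ^ 2 ∂μ) := by
  have hint : ∀ i, Integrable (fun ω ↦ (X ω i - m i) ^ 2) μ :=
    fun i ↦ ((hX i).sub (memLp_const _)).integrable_sq
  rw [← integral_finsetSum _ fun i _ ↦ hint i]
  exact integral_sqrt_le_sqrt_integral (.of_forall fun ω ↦ by positivity)
    (integrable_finsetSum _ fun i _ ↦ hint i)

theorem integral_sqrt_sum_sq_sub_le_of_moments [IsProbabilityMeasure μ] {X Y : α → ι → ℝ}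
    (hX : ∀ i, MemLp (fun ω ↦ X ω i) 2 μ) (hY : ∀ i, MemLp (fun ω ↦ Y ω i) 2 μ)
    {m m' v v' : ι → ℝ} (hv : ∀ i, ∫ ω, (X ω i - m i) ^ 2 ∂μ ≤ v i)
    (hv' : ∀ i, ∫ ω, (Y ω i - m' i) ^ 2 ∂μ ≤ v' i) :
    ∫ ω, √(∑ i, (X ω i - Y ω i) ^ 2) ∂μ ≤
      √(∑ i, v i) + √(∑ i, v' i) + √(∑ i, (m i - m' i) ^ 2) := by
  have hsqrt : ∀ {Z : α → ι → ℝ} {c : ι → ℝ}, (∀ i, MemLp (fun ω ↦ Z ω i) 2 μ) →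
      Integrable (fun ω ↦ √(∑ i, (Z ω i - c i) ^ 2)) μ := fun hZ ↦
    integrable_sqrt_of_nonneg (.of_forall fun ω ↦ by positivity)
      (integrable_finsetSum _ fun i _ ↦ ((hZ i).sub (memLp_const _)).integrable_sq)
  calc ∫ ω, √(∑ i, (X ω i - Y ω i) ^ 2) ∂μ
      ≤ ∫ ω, (√(∑ i, (X ω i - m i) ^ 2) + √(∑ i, (Y ω i - m' i) ^ 2)
          + √(∑ i, (m i - m' i) ^ 2)) ∂μ :=
        integral_mono_of_nonneg (.of_forall fun ω ↦ sqrt_nonneg _)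
          (((hsqrt hX).add (hsqrt hY)).add (integrable_const _))
          (.of_forall fun ω ↦ sqrt_sum_sq_sub_le_add_add (X ω) (Y ω) m m')
    _ = ∫ ω, √(∑ i, (X ω i - m i) ^ 2) ∂μ + ∫ ω, √(∑ i, (Y ω i - m' i) ^ 2) ∂μ
          + √(∑ i, (m i - m' i) ^ 2) := by
        rw [integral_add, integral_add, integral_const, probReal_univ, one_smul]
        exacts [hsqrt hX, hsqrt hY, (hsqrt hX).add (hsqrt hY), integrable_const _]
    _ ≤ √(∑ i, v i) + √(∑ i, v' i) + √(∑ i, (m i - m' i) ^ 2) := by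
        gcongr
        · exact (integral_sqrt_sum_sq_sub_le hX m).trans
            (sqrt_le_sqrt (Finset.sum_le_sum fun i _ ↦ hv i))
        · exact (integral_sqrt_sum_sq_sub_le hY m').trans
            (sqrt_le_sqrt (Finset.sum_le_sum fun i _ ↦ hv' i))

end Moments

theorem multi_semantic_pixel_distance_bound_general
    {α : Type*} [MeasurableSpace α] (μprob : Measure α) [IsProbabilityMeasure μprob]
    (d : ℕ)
    {S : Type*} [DecidableEq S]
    (mean : S → Fin 3 → ℝ) (σ : S → Fin 3 → ℝ)
    (lab : Fin d × Fin d → S) (smax : S)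
    (Xt Xt' : α → Fin d → Fin d → Fin 3 → ℝ)
    (hL2 : ∀ (j ℓ : Fin d) (i : Fin 3), MemLp (fun ω => Xt ω j ℓ i) 2 μprob)
    (hL2' : ∀ (j ℓ : Fin d) (i : Fin 3), MemLp (fun ω => Xt' ω j ℓ i) 2 μprob)
    (hvar : ∀ (j ℓ : Fin d) (i : Fin 3),
      (∫ ω, (Xt ω j ℓ i - mean (lab (j, ℓ)) i) ^ 2 ∂μprob) ≤ (σ (lab (j, ℓ)) i) ^ 2)
    (hvar' : ∀ (j ℓ : Fin d) (i : Fin 3),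
      (∫ ω, (Xt' ω j ℓ i - mean smax i) ^ 2 ∂μprob) ≤ (σ smax i) ^ 2) :
    (∫ ω, Real.sqrt (∑ j, ∑ ℓ, ∑ i, (Xt ω j ℓ i - Xt' ω j ℓ i) ^ 2) ∂μprob) ≤
      Real.sqrt (∑ j, ∑ ℓ, ∑ i, (σ (lab (j, ℓ)) i) ^ 2) +
        Real.sqrt (∑ j : Fin d, ∑ ℓ : Fin d, ∑ i, (σ smax i) ^ 2) +
        Real.sqrt (∑ j, ∑ ℓ, ∑ i,
          if lab (j, ℓ) ≠ smax then (mean (lab (j, ℓ)) i - mean smax i) ^ 2 else 0) := by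
  have hbias : ∀ j ℓ i, (if lab (j, ℓ) ≠ smax then (mean (lab (j, ℓ)) i - mean smax i) ^ 2
      else 0) = (mean (lab (j, ℓ)) i - mean smax i) ^ 2 := by
    intro j ℓ i
    split_ifs with h
    · rfl
    · simp [not_not.mp h]
  simp only [hbias]
  simpa only [Fintype.sum_prod_type] using
    integral_sqrt_sum_sq_sub_le_of_moments (ι := Fin d × Fin d × Fin 3)
      (X := fun ω q ↦ Xt ω q.1 q.2.1 q.2.2) (Y := fun ω q ↦ Xt' ω q.1 q.2.1 q.2.2)
      (m := fun q ↦ mean (lab (q.1, q.2.1)) q.2.2) (m' := fun q ↦ mean smax q.2.2)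
      (fun q ↦ hL2 _ _ _) (fun q ↦ hL2' _ _ _) (fun q ↦ hvar _ _ _) (fun q ↦ hvar' _ _ _)

/-- **Multiple-semantic-label pixel-level distance bound.**
Let `s : [d]×[d] → S` be a fixed pixel labeling, `s_max ∈ S`, and let `X, X'` be random
`d × d × 3` tensors with all entries mutually independent, where `X_{j,ℓ}^(i)` has mean
`μ_{s(j,ℓ)}^(i)` and variance at most `(σ_{s(j,ℓ)}^(i))²` while `X'_{j,ℓ}^(i)` has mean
`μ_{s_max}^(i)` and variance at most `(σ_{s_max}^(i))²`. Then
`E‖X − X'‖_F ≤ (Σ_{j,ℓ,i} (σ_{s(j,ℓ)}^(i))²)^{1/2} + (Σ_{j,ℓ,i} (σ_{s_max}^(i))²)^{1/2}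
  + (Σ_{(j,ℓ): s(j,ℓ)≠s_max} Σ_i (μ_{s(j,ℓ)}^(i) − μ_{s_max}^(i))²)^{1/2}`. -/
theorem multi_semantic_pixel_distance_bound
    {α : Type*} [MeasurableSpace α] (μprob : Measure α) [IsProbabilityMeasure μprob]
    (d : ℕ) (hd : 1 ≤ d)
    {S : Type*} [Fintype S] [DecidableEq S]
    (mean : S → Fin 3 → ℝ) (σ : S → Fin 3 → ℝ) (hσ : ∀ s i, 0 ≤ σ s i)
    (lab : Fin d × Fin d → S) (smax : S)
    (Xt Xt' : α → Fin d → Fin d → Fin 3 → ℝ)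
    (hindep : iIndepFun
      (fun q : (Fin d × Fin d × Fin 3) × Bool => fun ω =>
        if q.2 then Xt' ω q.1.1 q.1.2.1 q.1.2.2 else Xt ω q.1.1 q.1.2.1 q.1.2.2) μprob)
    (hL2 : ∀ (j ℓ : Fin d) (i : Fin 3), MemLp (fun ω => Xt ω j ℓ i) 2 μprob)
    (hL2' : ∀ (j ℓ : Fin d) (i : Fin 3), MemLp (fun ω => Xt' ω j ℓ i) 2 μprob)
    (hmean : ∀ (j ℓ : Fin d) (i : Fin 3),
      (∫ ω, Xt ω j ℓ i ∂μprob) = mean (lab (j, ℓ)) i)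
    (hmean' : ∀ (j ℓ : Fin d) (i : Fin 3),
      (∫ ω, Xt' ω j ℓ i ∂μprob) = mean smax i)
    (hvar : ∀ (j ℓ : Fin d) (i : Fin 3),
      (∫ ω, (Xt ω j ℓ i - mean (lab (j, ℓ)) i) ^ 2 ∂μprob) ≤ (σ (lab (j, ℓ)) i) ^ 2)
    (hvar' : ∀ (j ℓ : Fin d) (i : Fin 3),
      (∫ ω, (Xt' ω j ℓ i - mean smax i) ^ 2 ∂μprob) ≤ (σ smax i) ^ 2) :
    (∫ ω, Real.sqrt (∑ j, ∑ ℓ, ∑ i, (Xt ω j ℓ i - Xt' ω j ℓ i) ^ 2) ∂μprob) ≤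
      Real.sqrt (∑ j, ∑ ℓ, ∑ i, (σ (lab (j, ℓ)) i) ^ 2) +
        Real.sqrt (∑ j : Fin d, ∑ ℓ : Fin d, ∑ i, (σ smax i) ^ 2) +
        Real.sqrt (∑ j, ∑ ℓ, ∑ i,
          if lab (j, ℓ) ≠ smax then (mean (lab (j, ℓ)) i - mean smax i) ^ 2 else 0) :=
  multi_semantic_pixel_distance_bound_general μprob d mean σ lab smax Xt Xt' hL2 hL2' hvar hvar'
end
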